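/- arXiv:1907.09020 — 4 statements merged into one kernel-verified Lean document; each statement's English description precedes it below -/
import Mathlib

section
/- Let L ⊂ ℝ^n be a (full-rank) lattice, s > 0, and β ≥ 0 be such that N_α(L) ≤ 2^{βn}·α^n for all α ≥ 1. Then ρ_s(L) < 1 + (2^{2β}·s²/(π·λ1(L)²))^{n/2} · Γ(n/2 + 1), where Γ is the Gamma function. -/
open scoped BigOperators RealInnerProductSpace

noncomputable section

/-- Euclidean space ℝⁿ. -/
abbrev Euc (n : ℕ) := EuclideanSpace ℝ (Fin n)

/-- `IsLattice L` : `L ⊂ ℝⁿ` is a (full-rank) lattice, i.e. the set of integer linear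
combinations of some ℝ-basis of ℝⁿ. -/
def IsLattice {n : ℕ} (L : Set (Euc n)) : Prop :=
  ∃ b : Module.Basis (Fin n) ℝ (Euc n),
    L = {x | ∃ z : Fin n → ℤ, x = ∑ i, (z i : ℝ) • b i}

/-- The dual lattice `L* = {w : ⟨w, y⟩ ∈ ℤ for all y ∈ L}`. -/
def dualLattice {n : ℕ} (L : Set (Euc n)) : Set (Euc n) :=
  {w | ∀ y ∈ L, ∃ k : ℤ, ⟪w, y⟫ = (k : ℝ)}

/-- `λ₁(L)` : the length of a shortest nonzero lattice vector. -/
def lambda1 {n : ℕ} (L : Set (Euc n)) : ℝ :=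
  sInf {r : ℝ | ∃ y ∈ L, y ≠ 0 ∧ ‖y‖ = r}

/-- `μ(L)` : the covering radius `sup_t inf_{y ∈ L} ‖y - t‖`. -/
def covRadius {n : ℕ} (L : Set (Euc n)) : ℝ :=
  ⨆ t : Euc n, ⨅ y : L, ‖(y : Euc n) - t‖

/-- `ρ_s(L - t)` : the Gaussian mass `∑_{y ∈ L} exp(-π‖y - t‖²/s²)`. -/
def gaussMass {n : ℕ} (s : ℝ) (L : Set (Euc n)) (t : Euc n) : ℝ :=
  ∑' y : L, Real.exp (-(Real.pi * ‖(y : Euc n) - t‖ ^ 2 / s ^ 2))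

/-- `ρ_{s,r}(L - t)` : the truncated Gaussian mass
`∑_{y ∈ L, ‖y - t‖ ≥ r} exp(-π‖y - t‖²/s²)`. -/
def truncGaussMass {n : ℕ} (s r : ℝ) (L : Set (Euc n)) (t : Euc n) : ℝ :=
  ∑' y : {v : Euc n // v ∈ L ∧ r ≤ ‖v - t‖},
    Real.exp (-(Real.pi * ‖(y : Euc n) - t‖ ^ 2 / s ^ 2))

/-- `N_α(L)` : the number of nonzero lattice points in the closed ball of radius `α·λ₁(L)`. -/
def latticePointCount {n : ℕ} (α : ℝ) (L : Set (Euc n)) : ℕ :=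
  Set.ncard {y ∈ L | y ≠ 0 ∧ ‖y‖ ≤ α * lambda1 L}

/-! ### Auxiliary lemmas -/

lemma IsLattice.eq_span {n : ℕ} {L : Set (Euc n)} (b : Module.Basis (Fin n) ℝ (Euc n))
    (hLb : L = {x | ∃ z : Fin n → ℤ, x = ∑ i, (z i : ℝ) • b i}) :
    L = (Submodule.span ℤ (Set.range b) : Set (Euc n)) := by
  rw [hLb]
  ext x
  simp only [Set.mem_setOf_eq, SetLike.mem_coe, Finsupp.mem_span_range_iff_exists_finsupp]
  constructor
  · rintro ⟨z, rfl⟩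
    refine ⟨Finsupp.equivFunOnFinite.symm z, ?_⟩
    rw [Finsupp.sum_fintype]
    · simp [← Int.cast_smul_eq_zsmul ℝ]
    · simp
  · rintro ⟨c, rfl⟩
    refine ⟨c, ?_⟩
    rw [Finsupp.sum_fintype]
    · simp [← Int.cast_smul_eq_zsmul ℝ]
    · simp

lemma IsLattice.zero_mem {n : ℕ} {L : Set (Euc n)} (hL : IsLattice L) : (0 : Euc n) ∈ L := by
  obtain ⟨b, rfl⟩ := hL
  exact ⟨0, by simp⟩

lemma IsLattice.finite_inter {n : ℕ} {L : Set (Euc n)} (hL : IsLattice L) (R : ℝ) :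
    {y ∈ L | ‖y‖ ≤ R}.Finite := by
  obtain ⟨b, hLb⟩ := hL
  have hsp := IsLattice.eq_span b hLb
  have h1 : {y ∈ L | ‖y‖ ≤ R} = Metric.closedBall (0 : Euc n) R ∩ L := by
    ext y; simp [Set.mem_setOf_eq, Metric.mem_closedBall, dist_zero_right, and_comm]
  rw [h1, hsp]
  haveI : DiscreteTopology
      ((Submodule.span ℤ (Set.range b) : Submodule ℤ (Euc n)) : Set (Euc n)) :=
    inferInstanceAs (DiscreteTopology (Submodule.span ℤ (Set.range b)))
  exact Metric.finite_isBounded_inter_isClosed DiscreteTopology.isDiscrete Metric.isBounded_closedBall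
    (AddSubgroup.isClosed_of_discrete (H := (Submodule.span ℤ (Set.range b)).toAddSubgroup))

lemma IsLattice.countable {n : ℕ} {L : Set (Euc n)} (hL : IsLattice L) : L.Countable := by
  have h : L ⊆ ⋃ k : ℕ, {y ∈ L | ‖y‖ ≤ k} := fun y hy =>
    Set.mem_iUnion.2 ⟨⌈‖y‖⌉₊, hy, Nat.le_ceil _⟩
  exact (Set.countable_iUnion (fun k : ℕ => (hL.finite_inter (k : ℝ)).countable)).mono h

lemma IsLattice.lambda1_facts {n : ℕ} {L : Set (Euc n)} (hL : IsLattice L) (hn : 0 < n) :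
    0 < lambda1 L ∧ ∀ y ∈ L, y ≠ 0 → lambda1 L ≤ ‖y‖ := by
  obtain ⟨b, hLb⟩ := hL
  have hsp := IsLattice.eq_span b hLb
  set S := {r : ℝ | ∃ y ∈ L, y ≠ 0 ∧ ‖y‖ = r} with hS
  have hbdd : BddBelow S := ⟨0, fun r ⟨y, _, _, hr⟩ => hr ▸ norm_nonneg y⟩
  have hne : S.Nonempty := by
    refine ⟨‖b ⟨0, hn⟩‖, b ⟨0, hn⟩, ?_, b.ne_zero _, rfl⟩
    rw [hsp]
    exact Submodule.subset_span (Set.mem_range_self _)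
  haveI : DiscreteTopology (Submodule.span ℤ (Set.range b)) := inferInstance
  obtain ⟨ε, hε, hball⟩ : ∃ ε > 0, ∀ y : Submodule.span ℤ (Set.range b), dist y 0 < ε → y = 0 := by
    have h0 : ({(0 : Submodule.span ℤ (Set.range b))} : Set _) ∈
        nhds (0 : Submodule.span ℤ (Set.range b)) := by
      rw [nhds_discrete]; exact Set.mem_singleton _
    rw [Metric.mem_nhds_iff] at h0
    obtain ⟨ε, hε, hsub⟩ := h0
    exact ⟨ε, hε, fun y hy => hsub (by simpa [Metric.mem_ball] using hy)⟩
  constructor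
  · refine lt_of_lt_of_le hε (le_csInf hne ?_)
    rintro r ⟨y, hyL, hy0, rfl⟩
    by_contra hlt
    push_neg at hlt
    have hyM : y ∈ Submodule.span ℤ (Set.range b) := by rw [hsp] at hyL; exact hyL
    have := hball ⟨y, hyM⟩ (by simpa [dist_eq_norm, Subtype.dist_eq] using hlt)
    exact hy0 (by simpa [Subtype.ext_iff] using this)
  · intro y hyL hy0
    exact csInf_le hbdd ⟨y, hyL, hy0, rfl⟩

/-- The key algebraic identity `2^(βn)·α(t)ⁿ = C·t^(n/2)`. -/
lemma count_bound_alg {β s lam t : ℝ} (n : ℕ) (hβ : 0 ≤ β) (hs : 0 < s) (hlam : 0 < lam)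
    (ht : 0 < t) :
    (2 : ℝ) ^ (β * n) * (s * Real.sqrt (t / Real.pi) / lam) ^ n =
      ((2 : ℝ) ^ (2 * β) * s ^ 2 / (Real.pi * lam ^ 2)) ^ ((n : ℝ) / 2) * t ^ ((n : ℝ) / 2) := by
  have hπ : (0 : ℝ) < Real.pi := Real.pi_pos
  set α := s * Real.sqrt (t / Real.pi) / lam with hα
  have hα0 : 0 ≤ α := by positivity
  have hα2 : α ^ 2 = s ^ 2 * (t / Real.pi) / lam ^ 2 := by
    rw [hα, div_pow, mul_pow, Real.sq_sqrt (by positivity)]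
  have h2 : (2 : ℝ) ^ (β * n) = ((2 : ℝ) ^ (2 * β)) ^ ((n : ℝ) / 2) := by
    rw [← Real.rpow_mul (by norm_num : (0:ℝ) ≤ 2)]
    congr 1
    ring
  have hαn : α ^ n = (α ^ 2) ^ ((n : ℝ) / 2) := by
    rw [← Real.rpow_natCast α n, ← Real.rpow_natCast α 2, ← Real.rpow_mul hα0]
    congr 1
    push_cast
    ring
  rw [h2, hαn, ← Real.mul_rpow (by positivity) (by positivity),
    ← Real.mul_rpow (by positivity) ht.le]
  congr 1
  rw [hα2]
  field_simp

open scoped ENNReal NNReal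

set_option maxHeartbeats 2000000 in
open MeasureTheory in
theorem gaussMass_lt_of_pointCount_bound (n : ℕ) (L : Set (Euc n)) (hL : IsLattice L)
    (s : ℝ) (hs : 0 < s) (β : ℝ) (hβ : 0 ≤ β)
    (hN : ∀ α : ℝ, 1 ≤ α → (latticePointCount α L : ℝ) ≤ (2 : ℝ) ^ (β * n) * α ^ n) :
    gaussMass s L 0 <
      1 + ((2 : ℝ) ^ (2 * β) * s ^ 2 / (Real.pi * lambda1 L ^ 2)) ^ ((n : ℝ) / 2) *
        Real.Gamma ((n : ℝ) / 2 + 1) := by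
  have hπ : (0:ℝ) < Real.pi := Real.pi_pos
  rcases Nat.eq_zero_or_pos n with hn0 | hn
  · -- trivial case n = 0
    subst hn0
    haveI : Subsingleton (Euc 0) := by
      constructor; intro a b; ext i; exact absurd i.2 (by simp)
    haveI hU : Unique ↥L :=
      ⟨⟨⟨0, hL.zero_mem⟩⟩, fun y => Subtype.ext (Subsingleton.elim _ _)⟩
    have h1 : gaussMass s L 0 = 1 := by
      rw [gaussMass, tsum_eq_single (default : ↥L)
        (fun b hb => absurd (Unique.eq_default b) hb)]
      have : ((default : ↥L) : Euc 0) - 0 = 0 := Subsingleton.elim _ _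
      rw [this]
      simp
    rw [h1, show ((0:ℕ):ℝ) = 0 by norm_num]
    rw [zero_div, Real.rpow_zero, zero_add, Real.Gamma_one]
    norm_num
  · -- main case n ≥ 1
    obtain ⟨hlampos, hlamle⟩ := hL.lambda1_facts hn
    set lam := lambda1 L with hlam
    have hs2 : (0:ℝ) < s ^ 2 := by positivity
    set t0 : ℝ := Real.pi * lam ^ 2 / s ^ 2 with ht0def
    have ht0 : 0 < t0 := by positivity
    set C : ℝ := ((2:ℝ) ^ (2*β) * s ^ 2 / (Real.pi * lam ^ 2)) ^ ((n:ℝ)/2) with hCdef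
    have hC : 0 < C := by positivity
    set P : Set (Euc n) := {v | v ∈ L ∧ v ≠ 0} with hPdef
    have hPL : P ⊆ L := fun v hv => hv.1
    haveI hPcount : Countable ↥P := ((hL.countable.mono hPL)).to_subtype
    set G : Euc n → ℝ≥0∞ :=
      fun v => ENNReal.ofReal (Real.exp (-(Real.pi * ‖v - 0‖ ^ 2 / s ^ 2))) with hGdef
    have hxy : ∀ y : ↥P, t0 ≤ Real.pi * ‖(y : Euc n)‖ ^ 2 / s ^ 2 := by
      intro y
      have h1 : lam ≤ ‖(y:Euc n)‖ := hlamle _ y.2.1 y.2.2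
      have h2 : lam ^ 2 ≤ ‖(y:Euc n)‖ ^ 2 := pow_le_pow_left₀ hlampos.le h1 2
      rw [ht0def]
      gcongr
    have key : ∀ v : Euc n, G v = ENNReal.ofReal (Real.exp (-(Real.pi * ‖v‖ ^ 2 / s ^ 2))) := by
      intro v
      simp only [hGdef, sub_zero]
    -- each term as a lintegral
    have hterm : ∀ y : ↥P, G ↑y =
        ∫⁻ t : ℝ, (Set.Ioi (Real.pi * ‖(y:Euc n)‖^2 / s^2)).indicator
          (fun u => ENNReal.ofReal (Real.exp (-u))) t := by
      intro y
      have hint : IntegrableOn (fun u => Real.exp (-u))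
          (Set.Ioi (Real.pi * ‖(y:Euc n)‖^2 / s^2)) := by
        simpa [neg_one_mul] using
          exp_neg_integrableOn_Ioi (Real.pi * ‖(y:Euc n)‖^2 / s^2) one_pos
      rw [key, lintegral_indicator measurableSet_Ioi,
        ← ofReal_integral_eq_lintegral_ofReal hint
          (Filter.Eventually.of_forall fun u => (Real.exp_pos _).le),
        integral_exp_neg_Ioi]
    -- swap sum and integral
    have hswap : ∑' y : ↥P, G ↑y =
        ∫⁻ t : ℝ, ∑' y : ↥P, (Set.Ioi (Real.pi * ‖(y:Euc n)‖^2 / s^2)).indicator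
          (fun u => ENNReal.ofReal (Real.exp (-u))) t := by
      rw [lintegral_tsum (fun y : ↥P =>
        ((measurable_neg.exp.ennreal_ofReal).indicator measurableSet_Ioi).aemeasurable)]
      exact tsum_congr hterm
    -- pointwise count bound
    have hpt : ∀ t : ℝ,
        (∑' y : ↥P, (Set.Ioi (Real.pi * ‖(y:Euc n)‖^2 / s^2)).indicator
          (fun u => ENNReal.ofReal (Real.exp (-u))) t)
        ≤ (Set.Ioi t0).indicator
            (fun u => ENNReal.ofReal (C * u ^ ((n:ℝ)/2) * Real.exp (-u))) t := by
      intro t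
      by_cases ht : t0 < t
      · set α : ℝ := s * Real.sqrt (t / Real.pi) / lam with hαdef
        have htpos : 0 < t := ht0.trans ht
        have hα1 : 1 ≤ α := by
          rw [hαdef, le_div_iff₀ hlampos, one_mul]
          have h1 : lam / s ≤ Real.sqrt (t / Real.pi) := by
            rw [show lam / s = Real.sqrt ((lam/s)^2) from (Real.sqrt_sq (by positivity)).symm]
            apply Real.sqrt_le_sqrt
            rw [div_pow, div_le_div_iff₀ (by positivity) hπ]
            rw [ht0def] at ht
            rw [div_lt_iff₀ hs2] at ht
            nlinarith
          calc lam = s * (lam / s) := by field_simp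
            _ ≤ s * Real.sqrt (t / Real.pi) := by
                exact mul_le_mul_of_nonneg_left h1 hs.le
        have halam : α * lam = s * Real.sqrt (t / Real.pi) := by
          rw [hαdef, div_mul_cancel₀ _ hlampos.ne']
        set A : Set (Euc n) := {y ∈ L | y ≠ 0 ∧ ‖y‖ ≤ α * lambda1 L} with hAdef
        have hAfin : A.Finite :=
          (hL.finite_inter (α * lambda1 L)).subset (fun y hy => ⟨hy.1, hy.2.2⟩)
        set c : ℝ≥0∞ := ENNReal.ofReal (Real.exp (-t)) with hcdef
        set A' : Set ↥P := (fun y : ↥P => (y : Euc n)) ⁻¹' A with hA'def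
        have hstep1 : (∑' y : ↥P, (Set.Ioi (Real.pi * ‖(y:Euc n)‖^2 / s^2)).indicator
            (fun _ => c) t) ≤ ∑' y : ↥P, A'.indicator (fun _ => c) y := by
          apply ENNReal.tsum_le_tsum
          intro y
          by_cases hy : t ∈ Set.Ioi (Real.pi * ‖(y:Euc n)‖^2 / s^2)
          · rw [Set.indicator_of_mem hy]
            have hyA : (y : Euc n) ∈ A := by
              refine ⟨y.2.1, y.2.2, ?_⟩
              rw [← hlam, halam]
              rw [Set.mem_Ioi, div_lt_iff₀ hs2] at hy
              have h2 : ‖(y:Euc n)‖^2 ≤ (s * Real.sqrt (t/Real.pi))^2 := by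
                rw [mul_pow, Real.sq_sqrt (by positivity), ← mul_div_assoc,
                  le_div_iff₀ hπ]
                nlinarith
              calc ‖(y:Euc n)‖ = Real.sqrt (‖(y:Euc n)‖^2) :=
                    (Real.sqrt_sq (norm_nonneg _)).symm
                _ ≤ Real.sqrt ((s * Real.sqrt (t/Real.pi))^2) := Real.sqrt_le_sqrt h2
                _ = s * Real.sqrt (t/Real.pi) := Real.sqrt_sq (by positivity)
            rw [Set.indicator_of_mem (show y ∈ A' from hyA)]
          · rw [Set.indicator_of_notMem hy]
            exact zero_le
        have hstep2 : ∑' y : ↥P, A'.indicator (fun _ => c) y = A'.encard * c := by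
          rw [← tsum_subtype A' (fun _ => c), ENNReal.tsum_set_const]
        have hcard : (A'.encard : ℝ≥0∞) ≤ ENNReal.ofReal ((2:ℝ) ^ (β * n) * α ^ n) := by
          have h1 : A'.encard ≤ A.encard := by
            rw [← Subtype.coe_injective.encard_image A']
            exact Set.encard_le_encard (Set.image_preimage_subset _ _)
          have h2 : A.encard = (latticePointCount α L : ℕ∞) := by
            rw [← hAfin.cast_ncard_eq]
            rfl
          calc (A'.encard : ℝ≥0∞) ≤ (A.encard : ℝ≥0∞) := by exact_mod_cast h1
            _ = ((latticePointCount α L : ℕ) : ℝ≥0∞) := by rw [h2]; simp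
            _ = ENNReal.ofReal ((latticePointCount α L : ℕ) : ℝ) := by
                rw [ENNReal.ofReal_natCast]
            _ ≤ ENNReal.ofReal ((2:ℝ) ^ (β * n) * α ^ n) :=
                ENNReal.ofReal_le_ofReal (hN α hα1)
        calc (∑' y : ↥P, (Set.Ioi (Real.pi * ‖(y:Euc n)‖^2 / s^2)).indicator
              (fun _ => c) t) ≤ A'.encard * c := hstep1.trans_eq hstep2
          _ ≤ ENNReal.ofReal ((2:ℝ) ^ (β * n) * α ^ n) * c := mul_le_mul' hcard le_rfl
          _ = ENNReal.ofReal (C * t ^ ((n:ℝ)/2) * Real.exp (-t)) := by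
              rw [hcdef, ← ENNReal.ofReal_mul (by positivity)]
              congr 1
              rw [count_bound_alg n hβ hs hlampos htpos, hCdef]
          _ = (Set.Ioi t0).indicator
              (fun u => ENNReal.ofReal (C * u ^ ((n:ℝ)/2) * Real.exp (-u))) t :=
            (Set.indicator_of_mem (Set.mem_Ioi.mpr ht)
              (fun u => ENNReal.ofReal (C * u ^ ((n:ℝ)/2) * Real.exp (-u)))).symm
      · push_neg at ht
        have hz : ∀ y : ↥P, (Set.Ioi (Real.pi * ‖(y:Euc n)‖^2 / s^2)).indicator
            (fun u => ENNReal.ofReal (Real.exp (-u))) t = 0 := by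
          intro y
          apply Set.indicator_of_notMem
          rw [Set.mem_Ioi, not_lt]
          exact ht.trans (hxy y)
        rw [tsum_congr hz, tsum_zero]
        exact zero_le
    -- integrability
    have hint0 : IntegrableOn (fun u : ℝ => Real.exp (-u) * u ^ ((n:ℝ)/2)) (Set.Ioi 0) := by
      have h := Real.GammaIntegral_convergent (s := (n:ℝ)/2 + 1) (by positivity)
      simpa using h
    have hintC : IntegrableOn (fun u : ℝ => C * u ^ ((n:ℝ)/2) * Real.exp (-u))
        (Set.Ioi t0) := by
      have h1 : IntegrableOn (fun u : ℝ => Real.exp (-u) * u ^ ((n:ℝ)/2)) (Set.Ioi t0) :=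
        hint0.mono_set (Set.Ioi_subset_Ioi ht0.le)
      exact IntegrableOn.congr_fun (h1.const_mul C) (fun x _ => by ring) measurableSet_Ioi
    have hRHSlint : (∫⁻ t : ℝ, (Set.Ioi t0).indicator
          (fun u => ENNReal.ofReal (C * u ^ ((n:ℝ)/2) * Real.exp (-u))) t)
        = ENNReal.ofReal (∫ u in Set.Ioi t0, C * u ^ ((n:ℝ)/2) * Real.exp (-u)) := by
      rw [lintegral_indicator measurableSet_Ioi,
        ← ofReal_integral_eq_lintegral_ofReal hintC ?_]
      filter_upwards [ae_restrict_mem measurableSet_Ioi] with u hu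
      have hu0 : (0:ℝ) < u := ht0.trans hu
      positivity
    set B : ℝ := ∫ u in Set.Ioi t0, C * u ^ ((n:ℝ)/2) * Real.exp (-u) with hBdef
    have hB_nonneg : 0 ≤ B := by
      apply setIntegral_nonneg measurableSet_Ioi
      intro u hu
      have hu0 : (0:ℝ) < u := ht0.trans hu
      positivity
    -- B < C * Γ(n/2+1)
    have hB_lt : B < C * Real.Gamma ((n:ℝ)/2 + 1) := by
      have hΓ : Real.Gamma ((n:ℝ)/2 + 1) = ∫ u in Set.Ioi 0, Real.exp (-u) * u ^ ((n:ℝ)/2) := by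
        rw [Real.Gamma_eq_integral (by positivity)]
        simp
      have hsplit : (∫ u in Set.Ioi 0, Real.exp (-u) * u ^ ((n:ℝ)/2))
          = (∫ u in Set.Ioc 0 t0, Real.exp (-u) * u ^ ((n:ℝ)/2))
            + ∫ u in Set.Ioi t0, Real.exp (-u) * u ^ ((n:ℝ)/2) := by
        rw [← setIntegral_union (Set.Ioc_disjoint_Ioi le_rfl) measurableSet_Ioi
          (hint0.mono_set Set.Ioc_subset_Ioi_self)
          (hint0.mono_set (Set.Ioi_subset_Ioi ht0.le)),
          Set.Ioc_union_Ioi_eq_Ioi ht0.le]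
      have hpos : 0 < ∫ u in Set.Ioc 0 t0, Real.exp (-u) * u ^ ((n:ℝ)/2) := by
        rw [← intervalIntegral.integral_of_le ht0.le]
        apply intervalIntegral.intervalIntegral_pos_of_pos_on
        · rw [intervalIntegrable_iff_integrableOn_Ioc_of_le ht0.le]
          exact hint0.mono_set Set.Ioc_subset_Ioi_self
        · intro x hx
          have hx0 : 0 < x := hx.1
          positivity
        · exact ht0
      have hBC : B = C * ∫ u in Set.Ioi t0, Real.exp (-u) * u ^ ((n:ℝ)/2) := by
        rw [hBdef, ← integral_const_mul]
        apply setIntegral_congr_fun measurableSet_Ioi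
        intro x _
        ring
      rw [hBC, hΓ, hsplit]
      nlinarith
    -- assemble
    set E : ℝ≥0∞ := ∑' y : ↥L, G ↑y with hEdef
    have hgm : gaussMass s L 0 = E.toReal := by
      rw [hEdef, gaussMass, ENNReal.tsum_toReal_eq (fun y => ENNReal.ofReal_ne_top)]
      apply tsum_congr
      intro y
      exact (ENNReal.toReal_ofReal (Real.exp_nonneg _)).symm
    have hEsplit : E = ENNReal.ofReal 1 + ∑' y : ↥P, G ↑y := by
      rw [hEdef, tsum_subtype L G, tsum_subtype P G]
      have hfun : ∀ v, L.indicator G v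
          = ({(0:Euc n)} : Set (Euc n)).indicator G v + P.indicator G v := by
        intro v
        by_cases hv0 : v = 0
        · subst hv0
          rw [Set.indicator_of_mem hL.zero_mem,
            Set.indicator_of_mem (Set.mem_singleton (0 : Euc n)),
            Set.indicator_of_notMem (fun h => h.2 rfl), add_zero]
        · by_cases hvL : v ∈ L
          · rw [Set.indicator_of_mem hvL, Set.indicator_of_notMem (by simpa using hv0),
              Set.indicator_of_mem (show v ∈ P from ⟨hvL, hv0⟩), zero_add]
          · rw [Set.indicator_of_notMem hvL, Set.indicator_of_notMem (by simpa using hv0),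
              Set.indicator_of_notMem (fun h => hvL h.1), add_zero]
      rw [tsum_congr hfun, ENNReal.tsum_add]
      congr 1
      rw [tsum_eq_single (0:Euc n)
        (fun v hv => Set.indicator_of_notMem (by simpa using hv) _)]
      rw [Set.indicator_of_mem (Set.mem_singleton (0 : Euc n)), key]
      simp
    have hfin : E ≤ ENNReal.ofReal 1 + ENNReal.ofReal B := by
      rw [hEsplit]
      refine add_le_add le_rfl ?_
      calc ∑' y : ↥P, G ↑y
          = ∫⁻ t : ℝ, ∑' y : ↥P, (Set.Ioi (Real.pi * ‖(y:Euc n)‖^2 / s^2)).indicator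
              (fun u => ENNReal.ofReal (Real.exp (-u))) t := hswap
        _ ≤ ∫⁻ t : ℝ, (Set.Ioi t0).indicator
              (fun u => ENNReal.ofReal (C * u ^ ((n:ℝ)/2) * Real.exp (-u))) t :=
            lintegral_mono hpt
        _ = ENNReal.ofReal B := hRHSlint
    have hle : gaussMass s L 0 ≤ 1 + B := by
      rw [hgm]
      calc E.toReal ≤ (ENNReal.ofReal 1 + ENNReal.ofReal B).toReal :=
          ENNReal.toReal_mono (by simp [ENNReal.add_ne_top]) hfin
        _ = 1 + B := by
            rw [ENNReal.toReal_add ENNReal.ofReal_ne_top ENNReal.ofReal_ne_top,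
              ENNReal.toReal_ofReal zero_le_one, ENNReal.toReal_ofReal hB_nonneg]
    linarith
end
end

section
/- Let L ⊂ ℝ^n be a (full-rank) lattice and β ≥ 0 be such that N_α(L*) ≤ 2^{βn}·α^n for all α ≥ 1. If s > 0 satisfies (2^{2β}/(π·s²·λ1(L*)²))^{n/2} · Γ(n/2 + 1) ≤ 1/2, then ρ_{1/s}(L*) < 3/2. -/
open scoped BigOperators RealInnerProductSpace

noncomputable section

open MeasureTheory Real Set Filter
open scoped ENNReal

section AuxLattice

variable {n : ℕ} {L : Set (Euc n)} {b : Module.Basis (Fin n) ℝ (Euc n)}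

lemma basis_mem_lattice (hLb : L = {x | ∃ z : Fin n → ℤ, x = ∑ i, (z i : ℝ) • b i})
    (i : Fin n) : b i ∈ L := by
  rw [hLb]
  exact ⟨Pi.single i 1, by simp [Pi.single_apply, ite_smul]⟩

lemma zero_mem_dual : (0 : Euc n) ∈ dualLattice L :=
  fun y _ => ⟨0, by simp⟩

lemma mem_dual_iff (hLb : L = {x | ∃ z : Fin n → ℤ, x = ∑ i, (z i : ℝ) • b i}) (w : Euc n) :
    w ∈ dualLattice L ↔ ∀ i, ∃ k : ℤ, ⟪w, b i⟫ = (k : ℝ) := by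
  constructor
  · intro hw i; exact hw _ (basis_mem_lattice hLb i)
  · intro h y hy
    rw [hLb] at hy
    obtain ⟨z, rfl⟩ := hy
    choose k hk using h
    refine ⟨∑ i, z i * k i, ?_⟩
    rw [inner_sum]
    push_cast
    congr 1 with i
    rw [real_inner_smul_right, hk]

lemma eq_of_inner_basis (v w : Euc n) (h : ∀ i, ⟪v, b i⟫ = ⟪w, b i⟫) : v = w := by
  have h0 : ∀ i, ⟪v - w, b i⟫ = 0 := by
    intro i; rw [inner_sub_left, h i, sub_self]
  have hrep := b.sum_repr (v - w)
  have hz : ⟪v - w, v - w⟫ = 0 := by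
    calc ⟪v - w, v - w⟫ = ⟪v - w, ∑ i, b.repr (v - w) i • b i⟫ := by rw [hrep]
      _ = ∑ i, b.repr (v - w) i * ⟪v - w, b i⟫ := by
          rw [inner_sum]; simp only [real_inner_smul_right]
      _ = 0 := by simp [h0]
  exact sub_eq_zero.mp (inner_self_eq_zero.mp hz)

open Classical in
def icoord (b : Module.Basis (Fin n) ℝ (Euc n)) (y : Euc n) (i : Fin n) : ℤ :=
  if h : ∃ k : ℤ, ⟪y, b i⟫ = (k : ℝ) then h.choose else 0

lemma icoord_spec (y : Euc n) (i : Fin n) (h : ∃ k : ℤ, ⟪y, b i⟫ = (k : ℝ)) :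
    ((icoord b y i : ℤ) : ℝ) = ⟪y, b i⟫ := by
  rw [icoord, dif_pos h]
  exact h.choose_spec.symm

lemma dual_ball_finite (hLb : L = {x | ∃ z : Fin n → ℤ, x = ∑ i, (z i : ℝ) • b i}) (r : ℝ) :
    {y | y ∈ dualLattice L ∧ ‖y‖ ≤ r}.Finite := by
  set S := {y | y ∈ dualLattice L ∧ ‖y‖ ≤ r}
  have hco : ∀ y ∈ S, ∀ i, ((icoord b y i : ℤ) : ℝ) = ⟪y, b i⟫ := fun y hy i =>
    icoord_spec y i (((mem_dual_iff hLb y).mp hy.1) i)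
  have himg : (icoord b) '' S ⊆ Set.pi Set.univ (fun i => Set.Icc (-(⌈r * ‖b i‖⌉)) ⌈r * ‖b i‖⌉) := by
    rintro _ ⟨y, hy, rfl⟩ i _
    have h1 : |⟪y, b i⟫| ≤ r * ‖b i‖ := by
      calc |⟪y, b i⟫| ≤ ‖y‖ * ‖b i‖ := abs_real_inner_le_norm y (b i)
        _ ≤ r * ‖b i‖ := mul_le_mul_of_nonneg_right hy.2 (norm_nonneg _)
    rw [← hco y hy i] at h1
    constructor
    · have : -(⌈r * ‖b i‖⌉ : ℝ) ≤ (icoord b y i : ℝ) := by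
        have := neg_le_of_abs_le h1
        linarith [Int.le_ceil (r * ‖b i‖)]
      exact_mod_cast this
    · have : (icoord b y i : ℝ) ≤ (⌈r * ‖b i‖⌉ : ℝ) := by
        have := le_of_abs_le h1
        linarith [Int.le_ceil (r * ‖b i‖)]
      exact_mod_cast this
  have hfin : ((icoord b) '' S).Finite :=
    Set.Finite.subset (Set.Finite.pi (fun i => Set.finite_Icc _ _)) himg
  refine Set.Finite.of_finite_image hfin ?_
  intro y hy y' hy' hxy
  refine eq_of_inner_basis (b := b) y y' (fun i => ?_)
  rw [← hco y hy i, ← hco y' hy' i, hxy]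

lemma dual_countable (hLb : L = {x | ∃ z : Fin n → ℤ, x = ∑ i, (z i : ℝ) • b i}) :
    (dualLattice L).Countable := by
  have : dualLattice L ⊆ ⋃ m : ℕ, {y | y ∈ dualLattice L ∧ ‖y‖ ≤ m} := by
    intro y hy
    obtain ⟨m, hm⟩ := exists_nat_ge ‖y‖
    exact Set.mem_iUnion.mpr ⟨m, hy, hm⟩
  exact Set.Countable.mono this
    (Set.countable_iUnion fun m => (dual_ball_finite hLb m).countable)

lemma exists_nonzero_dual (hn : 0 < n)
    (hLb : L = {x | ∃ z : Fin n → ℤ, x = ∑ i, (z i : ℝ) • b i}) :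
    ∃ w ∈ dualLattice L, w ≠ 0 := by
  haveI : Nonempty (Fin n) := ⟨⟨0, hn⟩⟩
  set i0 : Fin n := ⟨0, hn⟩
  set f : Euc n →L[ℝ] ℝ := LinearMap.toContinuousLinearMap (b.coord i0)
  set w : Euc n := (InnerProductSpace.toDual ℝ (Euc n)).symm f
  have hw : ∀ x : Euc n, ⟪w, x⟫ = f x := by
    intro x
    rw [← InnerProductSpace.toDual_apply_apply]
    simp [w]
  refine ⟨w, ?_, ?_⟩
  · rw [mem_dual_iff hLb]
    intro i
    refine ⟨if i0 = i then 1 else 0, ?_⟩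
    rw [hw]
    simp only [f, LinearMap.coe_toContinuousLinearMap', Module.Basis.coord_apply, Module.Basis.repr_self]
    rw [Finsupp.single_apply]
    split <;> simp_all [eq_comm]
  · intro h0
    have : ⟪w, b i0⟫ = (1 : ℝ) := by
      rw [hw]
      simp [f]
    rw [h0] at this
    simp at this

lemma lambda1_facts (hn : 0 < n)
    (hLb : L = {x | ∃ z : Fin n → ℤ, x = ∑ i, (z i : ℝ) • b i}) :
    0 < lambda1 (dualLattice L) ∧
      ∀ y ∈ dualLattice L, y ≠ 0 → lambda1 (dualLattice L) ≤ ‖y‖ := by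
  obtain ⟨w, hwD, hw0⟩ := exists_nonzero_dual hn hLb
  set S := {r : ℝ | ∃ y ∈ dualLattice L, y ≠ 0 ∧ ‖y‖ = r}
  have hSne : S.Nonempty := ⟨‖w‖, w, hwD, hw0, rfl⟩
  have hSbdd : BddBelow S := ⟨0, by rintro r ⟨y, _, _, rfl⟩; exact norm_nonneg y⟩
  have hle : ∀ y ∈ dualLattice L, y ≠ 0 → lambda1 (dualLattice L) ≤ ‖y‖ := by
    intro y hy hy0
    exact csInf_le hSbdd ⟨y, hy, hy0, rfl⟩
  refine ⟨?_, hle⟩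
  set F := {y | (y ∈ dualLattice L ∧ ‖y‖ ≤ ‖w‖) ∧ y ≠ 0}
  have hFfin : F.Finite := (dual_ball_finite hLb ‖w‖).subset (fun y hy => hy.1)
  have hFne : F.Nonempty := ⟨w, ⟨hwD, le_refl _⟩, hw0⟩
  obtain ⟨y₀, hy₀F, hy₀min⟩ := Set.exists_min_image F norm hFfin hFne
  have hm : 0 < ‖y₀‖ := norm_pos_iff.mpr hy₀F.2
  have hlow : ∀ r ∈ S, ‖y₀‖ ≤ r := by
    rintro r ⟨y, hyD, hy0, rfl⟩
    by_cases hc : ‖y‖ ≤ ‖w‖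
    · exact hy₀min y ⟨⟨hyD, hc⟩, hy0⟩
    · exact le_trans (le_trans (hy₀min w ⟨⟨hwD, le_refl _⟩, hw0⟩) (le_of_not_ge hc)) (le_refl _)
  exact lt_of_lt_of_le hm (le_csInf hSne hlow)


end AuxLattice

section AuxAnalysis

lemma ftcGauss {c : ℝ} (hc : 0 < c) (r : ℝ) :
    ∫ u in Ioi r, 2 * c * u * Real.exp (-c * u ^ 2) = Real.exp (-c * r ^ 2) := by
  have hderiv : ∀ u ∈ Ioi r, HasDerivAt (fun u => -Real.exp (-c * u ^ 2))
      (2 * c * u * Real.exp (-c * u ^ 2)) u := by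
    intro u _
    have h1 : HasDerivAt (fun u : ℝ => -c * u ^ 2) (-c * (2 * u)) u := by
      simpa using (hasDerivAt_pow 2 u).const_mul (-c)
    have h2 : HasDerivAt (fun x => -Real.exp (-c * x ^ 2))
        (-(Real.exp (-c * u ^ 2) * (-c * (2 * u)))) u := (h1.exp).neg
    convert h2 using 1
    ring
  have hint : IntegrableOn (fun u => 2 * c * u * Real.exp (-c * u ^ 2)) (Ioi r) := by
    have := (integrable_mul_exp_neg_mul_sq hc).integrableOn (s := Ioi r)
    have h2 := this.const_mul (2 * c)
    exact h2.congr (Filter.Eventually.of_forall fun u => by ring)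
  have hcont : ContinuousOn (fun u => -Real.exp (-c * u ^ 2)) (Ici r) := by
    fun_prop
  have htend : Tendsto (fun u => -Real.exp (-c * u ^ 2)) atTop (nhds 0) := by
    rw [show (0 : ℝ) = -0 by ring]
    refine Tendsto.neg ?_
    have h1 : Tendsto (fun u : ℝ => c * u ^ 2) atTop atTop :=
      (tendsto_pow_atTop two_ne_zero).const_mul_atTop hc
    have h2 : Tendsto (fun u : ℝ => -c * u ^ 2) atTop atBot := by
      simpa [neg_mul] using tendsto_neg_atBot_iff.mpr h1
    exact Real.tendsto_exp_atBot.comp h2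
  have := integral_Ioi_of_hasDerivAt_of_tendsto (hcont r Set.self_mem_Ici) hderiv hint htend
  rw [this]
  ring

lemma gaussMoment {c : ℝ} (hc : 0 < c) (n : ℕ) :
    ∫ u in Ioi (0:ℝ), u ^ (n + 1) * Real.exp (-c * u ^ 2)
      = c ^ (-((n : ℝ) + 2) / 2) * (1 / 2) * Real.Gamma (((n : ℝ) + 2) / 2) := by
  have h := integral_rpow_mul_exp_neg_mul_rpow (p := 2) (q := (n : ℝ) + 1)
    (by norm_num) (by have : (0:ℝ) ≤ (n:ℝ) := Nat.cast_nonneg n; linarith : (-1:ℝ) < (n:ℝ)+1) hc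
  have heq : ∫ u in Ioi (0:ℝ), u ^ (n + 1) * Real.exp (-c * u ^ 2)
      = ∫ x in Ioi (0:ℝ), x ^ ((n : ℝ) + 1) * Real.exp (-c * x ^ (2:ℝ)) := by
    refine setIntegral_congr_fun measurableSet_Ioi (fun x hx => ?_)
    rw [mem_Ioi] at hx
    rw [rpow_two, show ((n:ℝ)+1) = ((n+1 : ℕ) : ℝ) by push_cast; ring,
      rpow_natCast]
  rw [heq, h]
  ring_nf

lemma const_algebra {c lam β : ℝ} (hc : 0 < c) (hlam : 0 < lam) (n : ℕ) :
    (2:ℝ) ^ (β * n) / lam ^ n * (2 * c) * (c ^ (-((n:ℝ)+2)/2) * (1/2) * Real.Gamma (((n:ℝ)+2)/2))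
      = ((2:ℝ) ^ (2*β) / (c * lam ^ 2)) ^ ((n:ℝ)/2) * Real.Gamma ((n:ℝ)/2 + 1) := by
  have hgamma : (((n:ℝ)+2)/2) = ((n:ℝ)/2 + 1) := by ring
  rw [hgamma]
  have h2 : (0:ℝ) ≤ (2:ℝ) ^ (2*β) := le_of_lt (rpow_pos_of_pos two_pos _)
  rw [div_rpow h2 (by positivity), mul_rpow hc.le (by positivity),
    ← rpow_natCast lam 2, ← rpow_mul hlam.le, ← rpow_mul (by norm_num : (0:ℝ) ≤ 2)]
  have hl : lam ^ (((2:ℕ):ℝ) * ((n:ℝ)/2)) = lam ^ (n:ℕ) := by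
    rw [show ((2:ℕ):ℝ) * ((n:ℝ)/2) = (n:ℝ) by push_cast; ring, rpow_natCast]
  have h2e : (2:ℝ) ^ (2*β*((n:ℝ)/2)) = (2:ℝ) ^ (β * n) := by
    rw [show 2*β*((n:ℝ)/2) = β * n by ring]
  rw [hl, h2e]
  have hcc : 2 * c * (c ^ (-((n:ℝ)+2)/2) * (1/2)) = c ^ (-(n:ℝ)/2) := by
    have h1 : c * c ^ (-((n:ℝ)+2)/2) = c ^ (1 + -((n:ℝ)+2)/2) := by
      nth_rewrite 1 [← Real.rpow_one c]
      rw [← Real.rpow_add hc]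
    calc 2 * c * (c ^ (-((n:ℝ)+2)/2) * (1/2)) = c * c ^ (-((n:ℝ)+2)/2) := by ring
      _ = c ^ (1 + -((n:ℝ)+2)/2) := h1
      _ = c ^ (-(n:ℝ)/2) := by congr 1; ring
  have hrw : (2:ℝ) ^ (β * ↑n) / lam ^ n * (2 * c) *
      (c ^ (-((n:ℝ)+2)/2) * (1/2) * Real.Gamma ((n:ℝ)/2 + 1))
      = ((2:ℝ) ^ (β * ↑n) / lam ^ n * (2 * c * (c ^ (-((n:ℝ)+2)/2) * (1/2)))) *
        Real.Gamma ((n:ℝ)/2 + 1) := by ring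
  rw [hrw, hcc]
  congr 1
  rw [show -(n:ℝ)/2 = -((n:ℝ)/2) by ring, Real.rpow_neg hc.le]
  have : c ^ ((n:ℝ)/2) ≠ 0 := ne_of_gt (rpow_pos_of_pos hc _)
  field_simp


lemma core_bound {n : ℕ} (β : ℝ) {E : Type*} [NormedAddCommGroup E] (D : Set E) (hD0 : (0 : E) ∈ D)
    (hDcnt : D.Countable)
    (hfin : ∀ r : ℝ, {y | y ∈ D ∧ ‖y‖ ≤ r}.Finite)
    {lam : ℝ} (hlam : 0 < lam) (hsep : ∀ y ∈ D, y ≠ 0 → lam ≤ ‖y‖)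
    {c : ℝ} (hc : 0 < c)
    (hNb : ∀ u : ℝ, lam < u →
      ((Set.ncard {y | (y ∈ D ∧ y ≠ 0) ∧ ‖y‖ < u} : ℝ)) ≤ (2:ℝ) ^ (β * n) * (u / lam) ^ n)
    (hhalf : (2:ℝ) ^ (β * n) / lam ^ n * (2 * c) *
      (c ^ (-((n:ℝ)+2)/2) * (1/2) * Real.Gamma (((n:ℝ)+2)/2)) ≤ 1 / 2) :
    ∑' y : D, Real.exp (-c * ‖(y : E)‖ ^ 2) < 3 / 2 := by
  classical
  set e : E → ℝ := fun y => Real.exp (-c * ‖y‖ ^ 2) with he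
  set g : E → ℝ≥0∞ := fun y => ENNReal.ofReal (e y) with hg
  set w : ℝ → ℝ := fun u => 2 * c * u * Real.exp (-c * u ^ 2) with hw
  set W : ℝ → ℝ≥0∞ := fun u => ENNReal.ofReal (w u) with hW
  have hWmeas : Measurable W := by
    apply Measurable.ennreal_ofReal
    fun_prop
  set D0 : Set E := D \ {0} with hD0def
  haveI : Countable ↥D := hDcnt.to_subtype
  haveI : Countable ↥D0 := (hDcnt.mono Set.diff_subset).to_subtype
  -- Step B : split the sum
  have hsplit : ∑' y : D, g y = g 0 + ∑' y : D0, g y := by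
    have hun : ({0} : Set E) ∪ D0 = D := by
      rw [hD0def, Set.union_comm, Set.diff_union_self, Set.union_eq_self_of_subset_right]
      simpa using hD0
    have hdisj : Disjoint ({0} : Set E) D0 := by
      simp [hD0def, Set.disjoint_left]
    calc ∑' y : D, g y = ∑' y : ↥(({0} : Set E) ∪ D0), g y := by rw [hun]
      _ = ∑' y : ({0} : Set E), g y + ∑' y : D0, g y :=
          ENNReal.summable.tsum_union_disjoint hdisj ENNReal.summable
      _ = g 0 + ∑' y : D0, g y := by rw [tsum_singleton]
  -- Step C : each term as a lintegral
  have hterm : ∀ y : E, y ∈ D0 → g y = ∫⁻ u in Ioi ‖y‖, W u := by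
    intro y hy
    have hnn : 0 ≤ᵐ[volume.restrict (Ioi ‖y‖)] w := by
      refine (ae_restrict_iff' measurableSet_Ioi).mpr (Filter.Eventually.of_forall ?_)
      intro u hu
      have h0 : (0:ℝ) ≤ u := le_trans (norm_nonneg y) (le_of_lt hu)
      have := Real.exp_pos (-c * u ^ 2)
      rw [hw]; positivity
    have hint : IntegrableOn w (Ioi ‖y‖) := by
      have h2 := ((integrable_mul_exp_neg_mul_sq hc).integrableOn (s := Ioi ‖y‖)).const_mul (2*c)
      exact h2.congr (Filter.Eventually.of_forall fun u => by rw [hw]; ring)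
    have := ofReal_integral_eq_lintegral_ofReal hint hnn
    show ENNReal.ofReal (Real.exp (-c * ‖y‖ ^ 2)) = ∫⁻ u in Ioi ‖y‖, W u
    rw [← ftcGauss hc ‖y‖]
    exact this
  -- Step D : swap sum and integral
  have hswap : ∑' y : D0, g y = ∫⁻ u, ∑' y : D0, (Ioi ‖(y : E)‖).indicator W u := by
    rw [lintegral_tsum (fun y => (hWmeas.indicator measurableSet_Ioi).aemeasurable)]
    refine tsum_congr fun y => ?_
    rw [hterm y y.2, ← lintegral_indicator measurableSet_Ioi W]
  -- Step E : pointwise bound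
  set M : ℝ → ℝ≥0∞ := fun u => ENNReal.ofReal ((2:ℝ) ^ (β * n) * (u / lam) ^ n) with hM
  have hpt : ∀ u : ℝ, (∑' y : D0, (Ioi ‖(y : E)‖).indicator W u)
      ≤ (Ioi lam).indicator (fun u => M u * W u) u := by
    intro u
    by_cases hu : lam < u
    · rw [Set.indicator_of_mem (show u ∈ Ioi lam from hu)]
      -- the set of relevant points is finite
      have hAfin : {y : ↥D0 | ‖(y : E)‖ < u}.Finite := by
        have : Set.Finite (Subtype.val ⁻¹' {v : E | v ∈ D ∧ ‖v‖ ≤ u} : Set ↥D0) :=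
          Set.Finite.preimage Subtype.val_injective.injOn (hfin u)
        refine this.subset fun y hy => ⟨y.2.1, le_of_lt hy⟩
      have hsum_eq : (∑' y : D0, (Ioi ‖(y : E)‖).indicator W u)
          = (hAfin.toFinset.card : ℝ≥0∞) * W u := by
        have hzero : ∀ y ∉ hAfin.toFinset, (Ioi ‖(y : E)‖).indicator W u = 0 := by
          intro y hy
          have : ¬ ‖(y : E)‖ < u := by simpa using hy
          exact Set.indicator_of_notMem this W
        rw [tsum_eq_sum hzero]
        have hmem : ∀ y ∈ hAfin.toFinset, (Ioi ‖(y : E)‖).indicator W u = W u := by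
          intro y hy
          have : ‖(y : E)‖ < u := by simpa using (hAfin.mem_toFinset.mp hy)
          exact Set.indicator_of_mem this W
        rw [Finset.sum_congr rfl hmem, Finset.sum_const, nsmul_eq_mul]
      rw [hsum_eq]
      refine mul_le_mul_left ?_ (W u)
      have hcard : (hAfin.toFinset.card : ℝ) ≤ (2:ℝ) ^ (β * n) * (u / lam) ^ n := by
        have hima : Subtype.val '' {y : ↥D0 | ‖(y : E)‖ < u}
            = {y | (y ∈ D ∧ y ≠ 0) ∧ ‖y‖ < u} := by
          have : {y : ↥D0 | ‖(y : E)‖ < u} = (Subtype.val ⁻¹' {v : E | ‖v‖ < u}) := rfl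
          rw [this, Subtype.image_preimage_coe]
          ext y
          simp [hD0def, and_comm, and_assoc]
        have h1 : hAfin.toFinset.card = Set.ncard {y : ↥D0 | ‖(y : E)‖ < u} :=
          (Set.ncard_eq_toFinset_card _ hAfin).symm
        have h2 : Set.ncard {y : ↥D0 | ‖(y : E)‖ < u}
            = Set.ncard {y | (y ∈ D ∧ y ≠ 0) ∧ ‖y‖ < u} := by
          rw [← hima, Set.ncard_image_of_injective _ Subtype.val_injective]
        rw [h1, h2]
        exact hNb u hu
      calc (hAfin.toFinset.card : ℝ≥0∞)
          = ENNReal.ofReal ((hAfin.toFinset.card : ℝ)) := by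
            rw [ENNReal.ofReal_natCast]
        _ ≤ M u := ENNReal.ofReal_le_ofReal hcard
    · have hz : ∀ y : ↥D0, (Ioi ‖(y : E)‖).indicator W u = 0 := by
        intro y
        refine Set.indicator_of_notMem ?_ W
        have : lam ≤ ‖(y : E)‖ := hsep _ y.2.1 y.2.2
        simp only [mem_Ioi, not_lt]
        exact le_trans (le_of_not_gt hu) this
      simp only [hz, tsum_zero]
      exact zero_le
  -- Step F : sum over nonzero bounded by integral over (lam, ∞)
  have hF : ∑' y : D0, g y ≤ ∫⁻ u in Ioi lam, M u * W u := by
    rw [hswap, ← lintegral_indicator measurableSet_Ioi]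
    exact lintegral_mono hpt
  -- Step G : compute the full integral
  set R : ℝ := (2:ℝ) ^ (β * n) / lam ^ n * (2 * c) *
      (c ^ (-((n:ℝ)+2)/2) * (1/2) * Real.Gamma (((n:ℝ)+2)/2)) with hR
  have hGint : IntegrableOn (fun u : ℝ => ((2:ℝ) ^ (β * n) * (u / lam) ^ n) * w u) (Ioi 0) := by
    have h1 : IntegrableOn (fun u : ℝ => u ^ ((n:ℝ)+1) * Real.exp (-c * u ^ 2)) (Ioi 0) :=
      integrableOn_rpow_mul_exp_neg_mul_sq hc
        (by have : (0:ℝ) ≤ (n:ℝ) := Nat.cast_nonneg n; linarith)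
    have h2 : IntegrableOn
        (fun u : ℝ => (2:ℝ) ^ (β * n) / lam ^ n * (2 * c) * (u ^ ((n:ℝ)+1) * Real.exp (-c * u ^ 2)))
        (Ioi 0) := h1.const_mul ((2:ℝ) ^ (β * n) / lam ^ n * (2 * c))
    refine h2.congr_fun (fun u hu => ?_) measurableSet_Ioi
    rw [mem_Ioi] at hu
    beta_reduce
    rw [show ((n:ℝ)+1) = ((n+1 : ℕ) : ℝ) by push_cast; ring, rpow_natCast]
    rw [hw]
    simp only
    rw [div_pow]
    field_simp
    ring
  have hG : ∫⁻ u in Ioi 0, M u * W u = ENNReal.ofReal R := by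
    have hnn : 0 ≤ᵐ[volume.restrict (Ioi (0:ℝ))]
        (fun u : ℝ => ((2:ℝ) ^ (β * n) * (u / lam) ^ n) * w u) := by
      refine (ae_restrict_iff' measurableSet_Ioi).mpr (Filter.Eventually.of_forall ?_)
      intro u hu
      rw [mem_Ioi] at hu
      have h1 : (0:ℝ) < (2:ℝ) ^ (β * n) := rpow_pos_of_pos two_pos _
      have h2 := Real.exp_pos (-c * u ^ 2)
      rw [hw]
      have h3 : (0:ℝ) < u / lam := div_pos hu hlam
      positivity
    have := (ofReal_integral_eq_lintegral_ofReal hGint hnn).symm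
    have hcongr : ∫⁻ u in Ioi 0, M u * W u
        = ∫⁻ u in Ioi (0:ℝ), ENNReal.ofReal (((2:ℝ) ^ (β * n) * (u / lam) ^ n) * w u) := by
      refine setLIntegral_congr_fun measurableSet_Ioi ?_
      intro u hu
      rw [mem_Ioi] at hu
      rw [hM, hW]
      simp only
      rw [← ENNReal.ofReal_mul (by positivity)]
    rw [hcongr, this]
    congr 1
    have hval : ∫ u in Ioi (0:ℝ), ((2:ℝ) ^ (β * n) * (u / lam) ^ n) * w u
        = (2:ℝ) ^ (β * n) / lam ^ n * (2 * c) *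
          ∫ u in Ioi (0:ℝ), u ^ (n+1) * Real.exp (-c * u ^ 2) := by
      rw [← integral_const_mul]
      refine setIntegral_congr_fun measurableSet_Ioi (fun u hu => ?_)
      rw [hw]
      simp only
      rw [div_pow]
      field_simp
      ring
    rw [hval, gaussMoment hc n, hR]
  -- Step H : strict inequality between the two integrals
  have hHlt : ∫⁻ u in Ioi lam, M u * W u < ∫⁻ u in Ioi 0, M u * W u := by
    have hMW : Measurable fun u => M u * W u := by
      apply Measurable.mul _ hWmeas
      apply Measurable.ennreal_ofReal
      fun_prop
    have hsplit2 : ∫⁻ u in Ioi (0:ℝ), M u * W u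
        = (∫⁻ u in Ioc 0 lam, M u * W u) + ∫⁻ u in Ioi lam, M u * W u := by
      rw [← lintegral_union measurableSet_Ioi (Set.Ioc_disjoint_Ioi le_rfl),
        Set.Ioc_union_Ioi_eq_Ioi hlam.le]
    have hpos : 0 < ∫⁻ u in Ioc (0:ℝ) lam, M u * W u := by
      rw [lintegral_pos_iff_support hMW]
      have hsub : Ioc (0:ℝ) lam ⊆ Function.support fun u => M u * W u := by
        intro u hu
        have hu1 : 0 < u := hu.1
        have h1 : 0 < M u := by
          rw [hM]
          simp only
          refine ENNReal.ofReal_pos.mpr ?_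
          have h3 : (0:ℝ) < u / lam := div_pos hu1 hlam
          have h4 : (0:ℝ) < (2:ℝ) ^ (β * n) := rpow_pos_of_pos two_pos _
          positivity
        have h2 : 0 < W u := by
          rw [hW]
          simp only
          refine ENNReal.ofReal_pos.mpr ?_
          rw [hw]
          have := Real.exp_pos (-c * u ^ 2)
          positivity
        simp [Function.mem_support]
        exact ⟨ne_of_gt h1, ne_of_gt h2⟩
      calc (0:ℝ≥0∞) < ENNReal.ofReal lam := by simpa using hlam
        _ = volume (Ioc (0:ℝ) lam) := by rw [Real.volume_Ioc]; norm_num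
        _ ≤ (volume.restrict (Ioc (0:ℝ) lam)) (Function.support fun u => M u * W u) := by
            rw [Measure.restrict_apply (measurableSet_support hMW)]
            rw [Set.inter_eq_right.mpr hsub]
    rw [hsplit2]
    have hfin2 : ∫⁻ u in Ioi lam, M u * W u ≠ ⊤ := by
      have hle : ∫⁻ u in Ioi lam, M u * W u ≤ ∫⁻ u in Ioi 0, M u * W u := by
        rw [hsplit2]; exact le_add_self
      exact ne_of_lt (lt_of_le_of_lt hle (hG ▸ ENNReal.ofReal_lt_top))
    calc ∫⁻ u in Ioi lam, M u * W u
        < (∫⁻ u in Ioi lam, M u * W u) + ∫⁻ u in Ioc 0 lam, M u * W u :=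
          ENNReal.lt_add_right hfin2 (ne_of_gt hpos)
      _ = _ := by rw [add_comm]
  -- Step I : assemble in ℝ≥0∞
  have hg0 : g 0 = 1 := by
    rw [hg, he]
    simp
  have htot : ∑' y : D, g y < ENNReal.ofReal (3/2) := by
    rw [hsplit, hg0]
    have h1 : ∑' y : D0, g y < ENNReal.ofReal (1/2) := by
      calc ∑' y : D0, g y ≤ ∫⁻ u in Ioi lam, M u * W u := hF
        _ < ∫⁻ u in Ioi 0, M u * W u := hHlt
        _ = ENNReal.ofReal R := hG
        _ ≤ ENNReal.ofReal (1/2) := ENNReal.ofReal_le_ofReal hhalf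
    calc 1 + ∑' y : D0, g y < 1 + ENNReal.ofReal (1/2) := by
          exact ENNReal.add_lt_add_left (by norm_num) h1
      _ = ENNReal.ofReal (3/2) := by
          rw [← ENNReal.ofReal_one, ← ENNReal.ofReal_add (by norm_num) (by norm_num)]
          norm_num
  -- Step J : back to ℝ
  have hne : ∑' y : D, g y ≠ ⊤ := ne_of_lt (lt_trans htot ENNReal.ofReal_lt_top)
  have hsummable : Summable fun y : D => e (y : E) := by
    have := ENNReal.summable_toReal hne
    refine this.congr fun y => ?_
    rw [hg, ENNReal.toReal_ofReal (le_of_lt (Real.exp_pos _))]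
  have hofReal : ENNReal.ofReal (∑' y : D, e (y : E)) = ∑' y : D, g y :=
    ENNReal.ofReal_tsum_of_nonneg (fun y => le_of_lt (Real.exp_pos _)) hsummable
  have hlt : ENNReal.ofReal (∑' y : D, e (y : E)) < ENNReal.ofReal (3/2) := by
    rw [hofReal]; exact htot
  have := (ENNReal.ofReal_lt_ofReal_iff (by norm_num)).mp hlt
  exact this


end AuxAnalysis

theorem dual_gaussMass_lt_three_halves (n : ℕ) (L : Set (Euc n)) (hL : IsLattice L)
    (β : ℝ) (hβ : 0 ≤ β)
    (hN : ∀ α : ℝ, 1 ≤ α →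
      (latticePointCount α (dualLattice L) : ℝ) ≤ (2 : ℝ) ^ (β * n) * α ^ n)
    (s : ℝ) (hs : 0 < s)
    (hcond : ((2 : ℝ) ^ (2 * β) / (Real.pi * s ^ 2 * lambda1 (dualLattice L) ^ 2)) ^ ((n : ℝ) / 2)
        * Real.Gamma ((n : ℝ) / 2 + 1) ≤ 1 / 2) :
    gaussMass (1 / s) (dualLattice L) 0 < 3 / 2 := by
  rcases Nat.eq_zero_or_pos n with hn0 | hn
  · exfalso
    subst hn0
    norm_num [Real.Gamma_one] at hcond
  obtain ⟨b, hLb⟩ := hL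
  have hlf := lambda1_facts (b := b) hn hLb
  obtain ⟨hlamp, hsep⟩ := hlf
  set D := dualLattice L with hD
  set lam := lambda1 (dualLattice L) with hlamdef
  set c := Real.pi * s ^ 2 with hcdef
  have hc : 0 < c := by positivity
  have hNb : ∀ u : ℝ, lam < u →
      ((Set.ncard {y | (y ∈ D ∧ y ≠ 0) ∧ ‖y‖ < u} : ℝ)) ≤ (2:ℝ) ^ (β * n) * (u / lam) ^ n := by
    intro u hu
    have hα : 1 ≤ u / lam := by rw [le_div_iff₀ hlamp]; linarith
    have hsub : {y | (y ∈ D ∧ y ≠ 0) ∧ ‖y‖ < u}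
        ⊆ {y | y ∈ D ∧ y ≠ 0 ∧ ‖y‖ ≤ (u / lam) * lambda1 D} := by
      intro y hy
      refine ⟨hy.1.1, hy.1.2, ?_⟩
      rw [← hlamdef, div_mul_cancel₀ _ (ne_of_gt hlamp)]
      exact le_of_lt hy.2
    have hfinB : {y | y ∈ D ∧ y ≠ 0 ∧ ‖y‖ ≤ (u / lam) * lambda1 D}.Finite :=
      (dual_ball_finite hLb ((u / lam) * lambda1 D)).subset
        (fun y hy => ⟨hy.1, hy.2.2⟩)
    have hcard := Set.ncard_le_ncard hsub hfinB
    calc ((Set.ncard {y | (y ∈ D ∧ y ≠ 0) ∧ ‖y‖ < u} : ℝ))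
        ≤ (Set.ncard {y | y ∈ D ∧ y ≠ 0 ∧ ‖y‖ ≤ (u / lam) * lambda1 D} : ℝ) :=
          Nat.cast_le.mpr hcard
      _ = (latticePointCount (u / lam) D : ℝ) := rfl
      _ ≤ (2:ℝ) ^ (β * n) * (u / lam) ^ n := hN _ hα
  have hhalf : (2:ℝ) ^ (β * n) / lam ^ n * (2 * c) *
      (c ^ (-((n:ℝ)+2)/2) * (1/2) * Real.Gamma (((n:ℝ)+2)/2)) ≤ 1 / 2 := by
    rw [const_algebra hc hlamp n]
    exact hcond
  have key := core_bound (n := n) β D zero_mem_dual (dual_countable hLb)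
    (fun r => dual_ball_finite hLb r) hlamp hsep hc hNb hhalf
  have hconv : gaussMass (1 / s) (dualLattice L) 0
      = ∑' y : D, Real.exp (-c * ‖(y : Euc n)‖ ^ 2) := by
    rw [gaussMass]
    refine tsum_congr fun y => ?_
    rw [sub_zero]
    congr 1
    rw [hcdef]
    field_simp
  rw [hconv]
  exact key
end
end

section
/- For every ε > 0 there exists N such that for all n ≥ N, every (full-rank) lattice L ⊂ ℝ^n, and every s ≥ (1/√(2π) + ε)·√n/λ1(L*), one has ρ_{1/s}(L*) ≤ 3/2. -/
open scoped BigOperators RealInnerProductSpace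

noncomputable section

open Real

namespace Smooth

variable {n : ℕ}

def D (d : Module.Basis (Fin n) ℝ (Euc n)) (z : Fin n → ℤ) : Euc n := ∑ i, (z i : ℝ) • d i

lemma D_eq (d : Module.Basis (Fin n) ℝ (Euc n)) (z : Fin n → ℤ) :
    D d z = d.equivFun.symm (fun i => (z i : ℝ)) := by
  rw [Module.Basis.equivFun_symm_apply]; rfl

lemma D_add (d : Module.Basis (Fin n) ℝ (Euc n)) (z w : Fin n → ℤ) :
    D d (z + w) = D d z + D d w := by
  simp [D, add_smul, Finset.sum_add_distrib]

lemma D_inj (d : Module.Basis (Fin n) ℝ (Euc n)) : Function.Injective (D d) := by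
  intro z w h
  rw [D_eq, D_eq] at h
  have := d.equivFun.symm.injective h
  funext i
  have := congrFun this i
  exact_mod_cast this

lemma exists_coord_bound (d : Module.Basis (Fin n) ℝ (Euc n)) :
    ∃ C : ℝ, 0 < C ∧ ∀ z : Fin n → ℤ, ∀ i, |(z i : ℝ)| ≤ C * ‖D d z‖ := by
  set T := LinearMap.toContinuousLinearMap (d.equivFun : Euc n →ₗ[ℝ] (Fin n → ℝ)) with hT
  refine ⟨‖T‖ + 1, by positivity, fun z i => ?_⟩
  have h1 : T (D d z) = fun i => (z i : ℝ) := by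
    rw [D_eq]
    exact d.equivFun.apply_symm_apply _
  have h2 : ‖T (D d z)‖ ≤ (‖T‖ + 1) * ‖D d z‖ := by
    calc ‖T (D d z)‖ ≤ ‖T‖ * ‖D d z‖ := T.le_opNorm _
      _ ≤ (‖T‖ + 1) * ‖D d z‖ := by
          apply mul_le_mul_of_nonneg_right (by linarith) (norm_nonneg _)
  have h3 : |(z i : ℝ)| ≤ ‖T (D d z)‖ := by
    rw [h1]
    simpa using norm_le_pi_norm (fun i => (z i : ℝ)) i
  linarith

lemma summable_pi_int {m : ℕ} {g : ℤ → ℝ} (hg : Summable g) (hg0 : ∀ k, 0 ≤ g k) :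
    Summable (fun z : Fin m → ℤ => ∏ i, g (z i)) := by
  induction m with
  | zero => exact summable_of_finite_support (Set.toFinite _)
  | succ m ih =>
      have h := hg.mul_of_nonneg ih hg0 (fun z => Finset.prod_nonneg fun i _ => hg0 _)
      refine (h.comp_injective (Fin.consEquiv fun _ : Fin (m+1) => ℤ).symm.injective).congr fun z => ?_
      show g (z 0) * ∏ i, g (Fin.tail z i) = ∏ i, g (z i)
      rw [Fin.prod_univ_succ]
      rfl

lemma summable_exp_abs {γ : ℝ} (hγ : 0 < γ) :
    Summable (fun k : ℤ => rexp (-γ * |(k : ℝ)|)) := by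
  have hnat : Summable (fun k : ℕ => rexp (-γ * k)) := by
    have : (fun k : ℕ => rexp (-γ * k)) = fun k : ℕ => (rexp (-γ)) ^ k := by
      funext k; rw [← Real.exp_nat_mul]; ring_nf
    rw [this]
    exact summable_geometric_of_lt_one (le_of_lt (Real.exp_pos _))
      (Real.exp_lt_one_iff.2 (by linarith))
  apply Summable.of_nat_of_neg
  · refine hnat.congr fun k => ?_; norm_num
  · refine hnat.congr fun k => ?_
    congr 1
    rw [Int.cast_neg]
    rw [abs_neg, abs_of_nonneg (by positivity)]
    norm_num

lemma summable_gauss (d : Module.Basis (Fin n) ℝ (Euc n)) {κ : ℝ} (hκ : 0 < κ) (v : Euc n) :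
    Summable (fun z : Fin n → ℤ => rexp (-(κ * ‖D d z + v‖ ^ 2))) := by
  obtain ⟨C, hC, hcb⟩ := exists_coord_bound d
  set γ : ℝ := κ / (2 * (n + 1) * C ^ 2) with hγdef
  have hγ : 0 < γ := by positivity
  have key : ∀ z : Fin n → ℤ, rexp (-(κ * ‖D d z + v‖ ^ 2)) ≤
      rexp (κ * ‖v‖ ^ 2) * ∏ i, rexp (-γ * |(z i : ℝ)|) := by
    intro z
    rw [← Real.exp_sum, ← Real.exp_add]
    apply Real.exp_le_exp.2
    have hsum : ∑ i, (-γ * |(z i : ℝ)|) = -γ * ∑ i, |(z i : ℝ)| :=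
      (Finset.mul_sum _ _ _).symm
    rw [hsum]
    have h1 : ∀ i, |(z i : ℝ)| ≤ C ^ 2 * ‖D d z‖ ^ 2 := by
      intro i
      have hz := hcb z i
      rcases eq_or_ne (z i) 0 with h | h
      · simp [h]; positivity
      · have h : (1 : ℝ) ≤ |(z i : ℝ)| := by
          rw [← Int.cast_abs]; exact_mod_cast Int.one_le_abs h
        calc |(z i : ℝ)| ≤ |(z i : ℝ)| * |(z i : ℝ)| := le_mul_of_one_le_left (by positivity) h
          _ ≤ (C * ‖D d z‖) * (C * ‖D d z‖) :=
              mul_le_mul hz hz (by positivity) (by positivity)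
          _ = C ^ 2 * ‖D d z‖ ^ 2 := by ring
    have h2 : (∑ i, |(z i : ℝ)|) ≤ n * (C ^ 2 * ‖D d z‖ ^ 2) := by
      calc (∑ i, |(z i : ℝ)|) ≤ ∑ _i : Fin n, C ^ 2 * ‖D d z‖ ^ 2 :=
            Finset.sum_le_sum fun i _ => h1 i
        _ = n * (C ^ 2 * ‖D d z‖ ^ 2) := by simp [mul_comm]
    have h3 : ‖D d z‖ ^ 2 ≤ 2 * ‖D d z + v‖ ^ 2 + 2 * ‖v‖ ^ 2 := by
      have h4 : ‖D d z‖ ≤ ‖D d z + v‖ + ‖v‖ := by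
        have := norm_add_le (D d z + v) (-v); simpa using this
      nlinarith [h4, sq_nonneg (‖D d z + v‖ - ‖v‖), norm_nonneg (D d z)]
    have h5 : γ * ∑ i, |(z i : ℝ)| ≤ κ * ‖D d z + v‖ ^ 2 + κ * ‖v‖ ^ 2 := by
      have h6 : γ * ∑ i, |(z i : ℝ)|
          ≤ γ * ((n+1) * (C ^ 2 * (2 * ‖D d z + v‖ ^ 2 + 2 * ‖v‖ ^ 2))) := by
        apply mul_le_mul_of_nonneg_left _ (le_of_lt hγ)
        calc (∑ i, |(z i : ℝ)|) ≤ n * (C ^ 2 * ‖D d z‖ ^ 2) := h2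
          _ ≤ (n+1) * (C ^ 2 * (2 * ‖D d z + v‖ ^ 2 + 2 * ‖v‖ ^ 2)) := by
              apply mul_le_mul (by linarith [Nat.cast_nonneg (α := ℝ) n])
                (mul_le_mul_of_nonneg_left h3 (by positivity)) (by positivity)
                (by positivity)
      have heq : γ * ((n+1) * (C ^ 2 * (2 * ‖D d z + v‖ ^ 2 + 2 * ‖v‖ ^ 2)))
          = κ * ‖D d z + v‖ ^ 2 + κ * ‖v‖ ^ 2 := by
        rw [hγdef]
        field_simp
      linarith [h6, heq.le]
    linarith
  apply Summable.of_nonneg_of_le (fun z => (Real.exp_pos _).le) key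
  exact ((summable_pi_int (summable_exp_abs hγ) (fun k => (Real.exp_pos _).le)).mul_left _)
  

/-- the shifted Gaussian sum over the lattice, in coordinates -/
def gf (d : Module.Basis (Fin n) ℝ (Euc n)) (τ : ℝ) (u : Euc n) : ℝ :=
  ∑' z : Fin n → ℤ, rexp (-(τ * ‖D d z + u‖ ^ 2))

lemma gf_nonneg (d : Module.Basis (Fin n) ℝ (Euc n)) (τ : ℝ) (u : Euc n) : 0 ≤ gf d τ u :=
  tsum_nonneg fun z => (Real.exp_pos _).le

lemma one_le_gf_zero (d : Module.Basis (Fin n) ℝ (Euc n)) {τ : ℝ} (hτ : 0 < τ) :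
    1 ≤ gf d τ 0 := by
  have h0 : rexp (-(τ * ‖D d 0 + (0 : Euc n)‖ ^ 2)) = 1 := by
    simp [D]
  calc (1:ℝ) = rexp (-(τ * ‖D d 0 + (0 : Euc n)‖ ^ 2)) := h0.symm
    _ ≤ gf d τ 0 := Summable.le_tsum (summable_gauss d hτ 0) 0 (fun _ _ => (Real.exp_pos _).le)

lemma gf_periodic (d : Module.Basis (Fin n) ℝ (Euc n)) (τ : ℝ) (u : Euc n) (z₀ : Fin n → ℤ) :
    gf d τ (u + D d z₀) = gf d τ u := by
  unfold gf
  rw [← (Equiv.addRight z₀).tsum_eq (fun z => rexp (-(τ * ‖D d z + u‖ ^ 2)))]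
  apply tsum_congr
  intro z
  congr 2
  rw [Equiv.coe_addRight, D_add]
  abel_nf

lemma tsum_mul_tsum_nonneg {f g : (Fin n → ℤ) → ℝ} (hf : Summable f) (hg : Summable g)
    (hf0 : ∀ z, 0 ≤ f z) (hg0 : ∀ z, 0 ≤ g z) :
    (∑' z, f z) * (∑' z, g z) = ∑' p : (Fin n → ℤ) × (Fin n → ℤ), f p.1 * g p.2 := by
  rw [Summable.tsum_prod (hf.mul_of_nonneg hg hf0 hg0)]
  calc (∑' z, f z) * (∑' z, g z) = ∑' z, f z * (∑' w, g w) := by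
        rw [tsum_mul_right]
    _ = ∑' z, ∑' w, f z * g w := by
        apply tsum_congr; intro z; rw [tsum_mul_left]

def bint {n : ℕ} (c : Fin n → Bool) : Fin n → ℤ := fun i => if c i then 1 else 0

/-- parity decomposition of pairs of integer vectors -/
def parityEquiv (n : ℕ) :
    (Fin n → Bool) × ((Fin n → ℤ) × (Fin n → ℤ)) ≃ (Fin n → ℤ) × (Fin n → ℤ) where
  toFun p := (p.2.1 + p.2.2 + bint p.1, p.2.1 - p.2.2)
  invFun q := (fun i => decide ((q.1 i + q.2 i) % 2 = 1),
    (fun i => (q.1 i + q.2 i - (q.1 i + q.2 i) % 2) / 2,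
     fun i => (q.1 i - q.2 i - (q.1 i + q.2 i) % 2) / 2))
  left_inv := by
    rintro ⟨c, a, b⟩
    refine Prod.ext ?_ (Prod.ext ?_ ?_) <;> funext i <;>
      by_cases h : c i = true <;>
      simp [bint, h, decide_eq_true_eq] <;> omega
  right_inv := by
    rintro ⟨z, w⟩
    refine Prod.ext ?_ ?_ <;> funext i <;>
      by_cases h : (z i + w i) % 2 = 1 <;>
      simp [bint, h, decide_eq_true_eq] <;> omega

lemma D_sub (d : Module.Basis (Fin n) ℝ (Euc n)) (a b : Fin n → ℤ) :
    D d (a - b) = D d a - D d b := by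
  have h1 : (a - b) + b = a := by ring
  refine eq_sub_of_add_eq ?_
  rw [← D_add d (a - b) b, h1]

set_option maxHeartbeats 2000000 in
lemma gen_identity (d : Module.Basis (Fin n) ℝ (Euc n)) {τ : ℝ} (hτ : 0 < τ) (u₁ u₂ : Euc n) :
    gf d τ u₁ * gf d τ u₂ =
      ∑ c : Fin n → Bool,
        gf d (2 * τ) ((2:ℝ)⁻¹ • (D d (bint c) + u₁ + u₂)) *
        gf d (2 * τ) ((2:ℝ)⁻¹ • (D d (bint c) + u₁ - u₂)) := by
  have hsum1 := summable_gauss d hτ u₁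
  have hsum2 := summable_gauss d hτ u₂
  have h2τ : 0 < 2 * τ := by linarith
  have hHsum : Summable (fun p : (Fin n → ℤ) × (Fin n → ℤ) =>
      rexp (-(τ * ‖D d p.1 + u₁‖ ^ 2)) * rexp (-(τ * ‖D d p.2 + u₂‖ ^ 2))) :=
    hsum1.mul_of_nonneg hsum2 (fun z => (Real.exp_pos _).le) (fun z => (Real.exp_pos _).le)
  have step1 : gf d τ u₁ * gf d τ u₂ = ∑' p : (Fin n → ℤ) × (Fin n → ℤ),
      rexp (-(τ * ‖D d p.1 + u₁‖ ^ 2)) * rexp (-(τ * ‖D d p.2 + u₂‖ ^ 2)) :=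
    tsum_mul_tsum_nonneg hsum1 hsum2 (fun z => (Real.exp_pos _).le) (fun z => (Real.exp_pos _).le)
  -- pointwise factorization
  have key : ∀ (q : (Fin n → Bool) × ((Fin n → ℤ) × (Fin n → ℤ))),
      rexp (-(τ * ‖D d ((parityEquiv n) q).1 + u₁‖ ^ 2)) *
        rexp (-(τ * ‖D d ((parityEquiv n) q).2 + u₂‖ ^ 2)) =
      rexp (-(2 * τ * ‖D d q.2.1 + (2:ℝ)⁻¹ • (D d (bint q.1) + u₁ + u₂)‖ ^ 2)) *
        rexp (-(2 * τ * ‖D d q.2.2 + (2:ℝ)⁻¹ • (D d (bint q.1) + u₁ - u₂)‖ ^ 2)) := by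
    rintro ⟨c, a, b⟩
    have hq1 : ((parityEquiv n) (c, a, b)).1 = a + b + bint c := rfl
    have hq2 : ((parityEquiv n) (c, a, b)).2 = a - b := rfl
    rw [hq1, hq2]
    set P : Euc n := D d a + (2:ℝ)⁻¹ • (D d (bint c) + u₁ + u₂) with hP
    set Q : Euc n := D d b + (2:ℝ)⁻¹ • (D d (bint c) + u₁ - u₂) with hQ
    have hPQ1 : D d (a + b + bint c) + u₁ = P + Q := by
      rw [D_add, D_add, hP, hQ]; module
    have hPQ2 : D d (a - b) + u₂ = P - Q := by
      rw [D_sub, hP, hQ]; module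
    rw [hPQ1, hPQ2, ← Real.exp_add, ← Real.exp_add]
    congr 1
    have par := parallelogram_law_with_norm ℝ P Q
    rw [pow_two, pow_two, pow_two, pow_two]
    linear_combination (-τ) * par
  have hHsum' : Summable (fun q : (Fin n → Bool) × ((Fin n → ℤ) × (Fin n → ℤ)) =>
      rexp (-(τ * ‖D d ((parityEquiv n) q).1 + u₁‖ ^ 2)) *
      rexp (-(τ * ‖D d ((parityEquiv n) q).2 + u₂‖ ^ 2))) :=
    hHsum.comp_injective (parityEquiv n).injective
  have step2 : (∑' p : (Fin n → ℤ) × (Fin n → ℤ),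
        rexp (-(τ * ‖D d p.1 + u₁‖ ^ 2)) * rexp (-(τ * ‖D d p.2 + u₂‖ ^ 2)))
      = ∑' q : (Fin n → Bool) × ((Fin n → ℤ) × (Fin n → ℤ)),
        rexp (-(τ * ‖D d ((parityEquiv n) q).1 + u₁‖ ^ 2)) *
        rexp (-(τ * ‖D d ((parityEquiv n) q).2 + u₂‖ ^ 2)) :=
    ((parityEquiv n).tsum_eq _).symm
  have step3 : (∑' q : (Fin n → Bool) × ((Fin n → ℤ) × (Fin n → ℤ)),
        rexp (-(τ * ‖D d ((parityEquiv n) q).1 + u₁‖ ^ 2)) *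
        rexp (-(τ * ‖D d ((parityEquiv n) q).2 + u₂‖ ^ 2)))
      = ∑ c : Fin n → Bool, ∑' p : (Fin n → ℤ) × (Fin n → ℤ),
        rexp (-(2 * τ * ‖D d p.1 + (2:ℝ)⁻¹ • (D d (bint c) + u₁ + u₂)‖ ^ 2)) *
        rexp (-(2 * τ * ‖D d p.2 + (2:ℝ)⁻¹ • (D d (bint c) + u₁ - u₂)‖ ^ 2)) := by
    have hHsum2 : Summable (fun q : (Fin n → Bool) × ((Fin n → ℤ) × (Fin n → ℤ)) =>
        rexp (-(2 * τ * ‖D d q.2.1 + (2:ℝ)⁻¹ • (D d (bint q.1) + u₁ + u₂)‖ ^ 2)) *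
        rexp (-(2 * τ * ‖D d q.2.2 + (2:ℝ)⁻¹ • (D d (bint q.1) + u₁ - u₂)‖ ^ 2))) :=
      hHsum'.congr key
    rw [tsum_congr key, Summable.tsum_prod hHsum2, tsum_fintype]
  rw [step1, step2, step3]
  apply Finset.sum_congr rfl
  intro c _
  exact (tsum_mul_tsum_nonneg (summable_gauss d h2τ _) (summable_gauss d h2τ _)
    (fun z => (Real.exp_pos _).le) (fun z => (Real.exp_pos _).le)).symm

lemma exists_reduce (d : Module.Basis (Fin n) ℝ (Euc n)) (u : Euc n) :
    ∃ r : Euc n, ‖r‖ ≤ ∑ i, ‖d i‖ ∧ ∀ τ : ℝ, gf d τ u = gf d τ r := by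
  set z₀ : Fin n → ℤ := fun i => ⌊d.repr u i⌋ with hz₀
  refine ⟨u - D d z₀, ?_, ?_⟩
  · have hrepr : u = ∑ i, (d.repr u i) • d i := (d.sum_repr u).symm
    have heq : u - D d z₀ = ∑ i, (d.repr u i - (⌊d.repr u i⌋ : ℝ)) • d i := by
      nth_rewrite 1 [hrepr]
      rw [D, ← Finset.sum_sub_distrib]
      apply Finset.sum_congr rfl
      intro i _
      rw [sub_smul]
    rw [heq]
    refine (norm_sum_le _ _).trans ?_
    apply Finset.sum_le_sum
    intro i _
    rw [norm_smul]
    have h0 : (0:ℝ) ≤ d.repr u i - ⌊d.repr u i⌋ := sub_nonneg.2 (Int.floor_le _)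
    have h1 : d.repr u i - (⌊d.repr u i⌋:ℝ) ≤ 1 := by
      have := Int.lt_floor_add_one (d.repr u i); linarith
    calc |d.repr u i - (⌊d.repr u i⌋:ℝ)| * ‖d i‖ ≤ 1 * ‖d i‖ := by
          apply mul_le_mul_of_nonneg_right _ (norm_nonneg _)
          rw [abs_of_nonneg h0]; exact h1
      _ = ‖d i‖ := one_mul _
  · intro τ
    conv_lhs => rw [show u = (u - D d z₀) + D d z₀ by abel]
    rw [gf_periodic]

lemma gf_le_of_small (d : Module.Basis (Fin n) ℝ (Euc n)) {τ : ℝ} (hτ : 0 < τ) {R : ℝ}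
    {r : Euc n} (hr : ‖r‖ ≤ R) :
    gf d τ r ≤ rexp (τ * R ^ 2) * gf d (τ/2) 0 := by
  have hτ2 : 0 < τ/2 := by linarith
  have key : ∀ z : Fin n → ℤ, rexp (-(τ * ‖D d z + r‖ ^ 2)) ≤
      rexp (τ * R ^ 2) * rexp (-(τ/2 * ‖D d z + 0‖ ^ 2)) := by
    intro z
    rw [← Real.exp_add]
    apply Real.exp_le_exp.2
    have hR0 : 0 ≤ R := le_trans (norm_nonneg _) hr
    have h4 : ‖D d z‖ ≤ ‖D d z + r‖ + ‖r‖ := by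
      have := norm_add_le (D d z + r) (-r); simpa using this
    have h3 : ‖D d z‖ ^ 2 ≤ 2 * ‖D d z + r‖ ^ 2 + 2 * R ^ 2 := by
      nlinarith [h4, sq_nonneg (‖D d z + r‖ - ‖r‖), norm_nonneg (D d z), norm_nonneg r,
        norm_nonneg (D d z + r), hr]
    have : ‖D d z + (0 : Euc n)‖ = ‖D d z‖ := by rw [add_zero]
    rw [this]
    nlinarith [h3]
  calc gf d τ r ≤ ∑' z : Fin n → ℤ, rexp (τ * R ^ 2) * rexp (-(τ/2 * ‖D d z + 0‖ ^ 2)) := by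
        apply Summable.tsum_le_tsum key (summable_gauss d hτ r)
        exact (summable_gauss d hτ2 0).mul_left _
    _ = rexp (τ * R ^ 2) * gf d (τ/2) 0 := by rw [tsum_mul_left]; rfl

lemma gf_bddAbove (d : Module.Basis (Fin n) ℝ (Euc n)) {τ : ℝ} (hτ : 0 < τ) :
    BddAbove (Set.range (gf d τ)) := by
  refine ⟨rexp (τ * (∑ i, ‖d i‖) ^ 2) * gf d (τ/2) 0, ?_⟩
  rintro x ⟨u, rfl⟩
  obtain ⟨r, hr, heq⟩ := exists_reduce d u
  rw [heq τ]
  exact gf_le_of_small d hτ hr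

set_option maxHeartbeats 2000000 in
lemma gf_le_gf_zero (d : Module.Basis (Fin n) ℝ (Euc n)) {τ : ℝ} (hτ : 0 < τ) (u : Euc n) :
    gf d τ u ≤ gf d τ 0 := by
  have hbdd := gf_bddAbove d hτ
  set S := ⨆ v : Euc n, gf d τ v with hS
  have hleS : ∀ v, gf d τ v ≤ S := fun v => le_ciSup hbdd v
  have hρ : 1 ≤ gf d τ 0 := one_le_gf_zero d hτ
  have hρ0 : 0 ≤ gf d τ 0 := by linarith
  have hS1 : 1 ≤ S := le_trans hρ (hleS 0)
  have hS0 : 0 < S := by linarith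
  have key4 : ∀ v : Euc n, (gf d τ v) ^ 4 ≤ (gf d τ 0) ^ 3 * S := by
    intro v
    have id1 := gen_identity d hτ v v
    have id2 := gen_identity d hτ (v + v) 0
    have id3 := gen_identity d hτ 0 0
    simp only [add_sub_cancel_right, add_zero, sub_zero, add_assoc] at id1 id2 id3
    set F : (Fin n → Bool) → ℝ :=
      fun c => gf d (2 * τ) ((2:ℝ)⁻¹ • (D d (bint c) + (v + v))) with hF
    set G : (Fin n → Bool) → ℝ :=
      fun c => gf d (2 * τ) ((2:ℝ)⁻¹ • (D d (bint c))) with hG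
    have e1 : gf d τ v * gf d τ v = ∑ c : Fin n → Bool, F c * G c := id1
    have e2 : gf d τ (v + v) * gf d τ 0 = ∑ c : Fin n → Bool, F c * F c := id2
    have e3 : gf d τ 0 * gf d τ 0 = ∑ c : Fin n → Bool, G c * G c := id3
    have CS := Finset.sum_mul_sq_le_sq_mul_sq Finset.univ F G
    have hs2 : ∀ c, F c ^ 2 = F c * F c := fun c => sq (F c)
    simp only [sq] at CS
    rw [← e1, ← e2, ← e3] at CS
    calc (gf d τ v) ^ 4 = gf d τ v * gf d τ v * (gf d τ v * gf d τ v) := by ring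
      _ ≤ gf d τ (v + v) * gf d τ 0 * (gf d τ 0 * gf d τ 0) := CS
      _ ≤ S * gf d τ 0 * (gf d τ 0 * gf d τ 0) := by
          apply mul_le_mul_of_nonneg_right _ (by positivity)
          exact mul_le_mul_of_nonneg_right (hleS (v + v)) hρ0
      _ = (gf d τ 0) ^ 3 * S := by ring
  have hK0 : 0 ≤ (gf d τ 0) ^ 3 * S := by positivity
  have hk : ∀ v : Euc n, gf d τ v ≤ ((gf d τ 0) ^ 3 * S) ^ ((1:ℝ)/4) := by
    intro v
    have h := Real.rpow_le_rpow (by positivity : (0:ℝ) ≤ (gf d τ v)^4) (key4 v)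
      (by norm_num : (0:ℝ) ≤ 1/4)
    calc gf d τ v = ((gf d τ v) ^ (4:ℕ)) ^ ((1:ℝ)/4) := by
          rw [← Real.rpow_natCast (gf d τ v) 4, ← Real.rpow_mul (gf_nonneg d τ v)]
          norm_num
      _ ≤ ((gf d τ 0) ^ 3 * S) ^ ((1:ℝ)/4) := h
  have hSle : S ≤ ((gf d τ 0) ^ 3 * S) ^ ((1:ℝ)/4) := ciSup_le hk
  have hS4 : S ^ 4 ≤ (gf d τ 0) ^ 3 * S := by
    calc S ^ 4 ≤ (((gf d τ 0) ^ 3 * S) ^ ((1:ℝ)/4)) ^ 4 :=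
          pow_le_pow_left₀ hS0.le hSle 4
      _ = (gf d τ 0) ^ 3 * S := by
          rw [← Real.rpow_natCast (((gf d τ 0) ^ 3 * S) ^ ((1:ℝ)/4)) 4,
            ← Real.rpow_mul hK0]
          norm_num
  have hS3 : S ^ 3 ≤ (gf d τ 0) ^ 3 := by
    have h' : S ^ 3 * S ≤ (gf d τ 0) ^ 3 * S := by
      calc S ^ 3 * S = S ^ 4 := by ring
        _ ≤ (gf d τ 0) ^ 3 * S := hS4
    exact le_of_mul_le_mul_right h' hS0
  have : S ≤ gf d τ 0 := by
    exact (pow_le_pow_iff_left₀ hS0.le hρ0 (by norm_num)).1 hS3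
  exact (hleS u).trans this

open MeasureTheory in
lemma integrable_gauss_real {a : ℝ} (ha : 0 < a) :
    Integrable (fun v : Euc n => rexp (-(a * ‖v‖ ^ 2))) := by
  have h := (GaussianFourier.integrable_cexp_neg_mul_sq_norm_add (V := Euc n) (b := (a : ℂ))
    (by simpa using ha) 0 0).norm
  refine h.congr ?_
  filter_upwards with v
  rw [Complex.norm_exp]
  congr 1
  simp [neg_mul, ← Complex.ofReal_pow]

lemma gf_zero_eq (d : Module.Basis (Fin n) ℝ (Euc n)) (τ : ℝ) :
    gf d τ 0 = ∑' z : Fin n → ℤ, rexp (-(τ * ‖D d z‖ ^ 2)) := by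
  apply tsum_congr; intro z; rw [add_zero]

open MeasureTheory in
set_option maxHeartbeats 1000000 in
lemma gf_scale (d : Module.Basis (Fin n) ℝ (Euc n)) {τ t : ℝ} (hτ : 0 < τ) (ht0 : 0 < t)
    (ht1 : t < 1) :
    gf d (t * τ) 0 ≤ (1/t) ^ ((n:ℝ)/2) * gf d τ 0 := by
  have h1t : (0:ℝ) < 1 - t := by linarith
  set b : ℝ := t * τ / (1 - t) with hbdef
  have hb : 0 < b := by positivity
  have hτb : 0 < τ + b := by linarith
  have hb1t : (τ + b) * (1 - t) = τ := by
    rw [hbdef]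
    field_simp
    ring
  have htτ : 0 < t * τ := by positivity
  -- the exponent identity
  have expid : ∀ x y : Euc n, τ * ‖x - y‖ ^ 2 + b * ‖y‖ ^ 2
      = (τ + b) * ‖y - (1 - t) • x‖ ^ 2 + t * τ * ‖x‖ ^ 2 := by
    intro x y
    have e1 : ‖x - y‖ ^ 2 = ‖x‖ ^ 2 - 2 * ⟪x, y⟫ + ‖y‖ ^ 2 := norm_sub_sq_real x y
    have e2 : ‖y - (1 - t) • x‖ ^ 2
        = ‖y‖ ^ 2 - 2 * ⟪y, (1 - t) • x⟫ + ‖(1 - t) • x‖ ^ 2 := norm_sub_sq_real y _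
    have e3 : ⟪y, (1 - t) • x⟫ = (1 - t) * ⟪x, y⟫ := by
      rw [real_inner_smul_right, real_inner_comm]
    have e4 : ‖(1 - t) • x‖ ^ 2 = (1 - t) ^ 2 * ‖x‖ ^ 2 := by
      rw [norm_smul, Real.norm_eq_abs, mul_pow, sq_abs]
    rw [e1, e2, e3, e4]
    linear_combination (2 * ⟪x, y⟫ - (1 - t) * ‖x‖ ^ 2) * hb1t
  -- the Gaussian convolution integral
  have hI : ∀ x : Euc n, ∫ y : Euc n, rexp (-(τ * ‖x - y‖ ^ 2 + b * ‖y‖ ^ 2))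
      = (Real.pi / (τ + b)) ^ ((n:ℝ)/2) * rexp (-(t * τ * ‖x‖ ^ 2)) := by
    intro x
    have : ∀ y : Euc n, rexp (-(τ * ‖x - y‖ ^ 2 + b * ‖y‖ ^ 2))
        = rexp (-((τ + b) * ‖y - (1 - t) • x‖ ^ 2)) * rexp (-(t * τ * ‖x‖ ^ 2)) := by
      intro y
      rw [← Real.exp_add, expid x y]
      ring_nf
    rw [funext this, integral_mul_const,
      integral_sub_right_eq_self (fun y : Euc n => rexp (-((τ + b) * ‖y‖ ^ 2))) ((1 - t) • x)]
    congr 1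
    have := GaussianFourier.integral_rexp_neg_mul_sq_norm (V := Euc n) hτb
    simp only [neg_mul] at this ⊢
    rw [this, finrank_euclideanSpace]
    norm_num
  -- integrability of each convolution term
  have hint : ∀ x : Euc n,
      Integrable (fun y : Euc n => rexp (-(τ * ‖x - y‖ ^ 2 + b * ‖y‖ ^ 2))) := by
    intro x
    have : ∀ y : Euc n, rexp (-(τ * ‖x - y‖ ^ 2 + b * ‖y‖ ^ 2))
        = rexp (-((τ + b) * ‖y - (1 - t) • x‖ ^ 2)) * rexp (-(t * τ * ‖x‖ ^ 2)) := by
      intro y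
      rw [← Real.exp_add, expid x y]
      ring_nf
    rw [funext this]
    exact ((integrable_gauss_real hτb).comp_sub_right ((1 - t) • x)).mul_const _
  -- sum the convolution identity over the lattice
  have hsumtτ := summable_gauss d htτ (0 : Euc n)
  have hAgt : (0:ℝ) < (Real.pi / (τ + b)) ^ ((n:ℝ)/2) :=
    Real.rpow_pos_of_pos (by positivity) _
  have step : (Real.pi / (τ + b)) ^ ((n:ℝ)/2) * gf d (t * τ) 0
      = ∑' z : Fin n → ℤ, ∫ y : Euc n, rexp (-(τ * ‖D d z - y‖ ^ 2 + b * ‖y‖ ^ 2)) := by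
    rw [gf_zero_eq, ← tsum_mul_left]
    apply tsum_congr
    intro z
    rw [hI (D d z)]
  have hsint : Summable (fun z : Fin n → ℤ =>
      ∫ y : Euc n, ‖rexp (-(τ * ‖D d z - y‖ ^ 2 + b * ‖y‖ ^ 2))‖) := by
    have : ∀ z : Fin n → ℤ, (∫ y : Euc n, ‖rexp (-(τ * ‖D d z - y‖ ^ 2 + b * ‖y‖ ^ 2))‖)
        = (Real.pi / (τ + b)) ^ ((n:ℝ)/2) * rexp (-(t * τ * ‖D d z + 0‖ ^ 2)) := by
      intro z
      rw [add_zero]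
      rw [← hI (D d z)]
      apply integral_congr_ae
      filter_upwards with y
      rw [Real.norm_eq_abs, abs_of_pos (Real.exp_pos _)]
    rw [funext this]
    exact hsumtτ.mul_left _
  have step2 : (∑' z : Fin n → ℤ, ∫ y : Euc n, rexp (-(τ * ‖D d z - y‖ ^ 2 + b * ‖y‖ ^ 2)))
      = ∫ y : Euc n, ∑' z : Fin n → ℤ, rexp (-(τ * ‖D d z - y‖ ^ 2 + b * ‖y‖ ^ 2)) :=
    integral_tsum_of_summable_integral_norm (fun z => hint (D d z)) hsint
  -- pointwise bound of the inner sum by the shift lemma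
  have hptwise : ∀ y : Euc n,
      (∑' z : Fin n → ℤ, rexp (-(τ * ‖D d z - y‖ ^ 2 + b * ‖y‖ ^ 2)))
      ≤ gf d τ 0 * rexp (-(b * ‖y‖ ^ 2)) := by
    intro y
    have hfac : ∀ z : Fin n → ℤ, rexp (-(τ * ‖D d z - y‖ ^ 2 + b * ‖y‖ ^ 2))
        = rexp (-(τ * ‖D d z + (-y)‖ ^ 2)) * rexp (-(b * ‖y‖ ^ 2)) := by
      intro z
      rw [← Real.exp_add, sub_eq_add_neg]
      ring_nf
    rw [funext hfac, tsum_mul_right]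
    apply mul_le_mul_of_nonneg_right _ (Real.exp_pos _).le
    exact gf_le_gf_zero d hτ (-y)
  have step3 : (∫ y : Euc n, ∑' z : Fin n → ℤ, rexp (-(τ * ‖D d z - y‖ ^ 2 + b * ‖y‖ ^ 2)))
      ≤ ∫ y : Euc n, gf d τ 0 * rexp (-(b * ‖y‖ ^ 2)) := by
    apply integral_mono_of_nonneg
    · filter_upwards with y
      exact tsum_nonneg fun z => (Real.exp_pos _).le
    · exact (integrable_gauss_real hb).const_mul _
    · filter_upwards with y
      exact hptwise y
  have step4 : (∫ y : Euc n, gf d τ 0 * rexp (-(b * ‖y‖ ^ 2)))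
      = gf d τ 0 * (Real.pi / b) ^ ((n:ℝ)/2) := by
    rw [integral_const_mul]
    congr 1
    have := GaussianFourier.integral_rexp_neg_mul_sq_norm (V := Euc n) hb
    simp only [neg_mul] at this ⊢
    rw [this, finrank_euclideanSpace]
    norm_num
  -- put it together
  have main : (Real.pi / (τ + b)) ^ ((n:ℝ)/2) * gf d (t * τ) 0
      ≤ gf d τ 0 * (Real.pi / b) ^ ((n:ℝ)/2) := by
    rw [step, step2, ← step4]
    exact step3
  have hsplit : (Real.pi / b) ^ ((n:ℝ)/2)
      = (Real.pi / (τ + b)) ^ ((n:ℝ)/2) * (1/t) ^ ((n:ℝ)/2) := by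
    have hbase : Real.pi / b = Real.pi / (τ + b) * (1/t) := by
      rw [hbdef]
      have h1 : t * τ / (1 - t) = t * (τ / (1 - t)) := by ring
      have h2 : τ + t * τ / (1 - t) = τ / (1 - t) := by field_simp; ring
      rw [h2, h1, mul_comm t (τ / (1 - t)), div_mul_eq_div_div, mul_one_div]
    rw [hbase, Real.mul_rpow (by positivity) (by positivity)]
  rw [hsplit] at main
  have : (Real.pi / (τ + b)) ^ ((n:ℝ)/2) * gf d (t * τ) 0
      ≤ (Real.pi / (τ + b)) ^ ((n:ℝ)/2) * ((1/t) ^ ((n:ℝ)/2) * gf d τ 0) := by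
    calc (Real.pi / (τ + b)) ^ ((n:ℝ)/2) * gf d (t * τ) 0
        ≤ gf d τ 0 * ((Real.pi / (τ + b)) ^ ((n:ℝ)/2) * (1/t) ^ ((n:ℝ)/2)) := main
      _ = (Real.pi / (τ + b)) ^ ((n:ℝ)/2) * ((1/t) ^ ((n:ℝ)/2) * gf d τ 0) := by ring
  exact le_of_mul_le_mul_left this hAgt

lemma main_bound (d : Module.Basis (Fin n) ℝ (Euc n)) {τ κ : ℝ} (hκ : 0 < κ) (hτ : 0 < τ)
    (hn : Real.log 3 * (2 * (1 + κ)) / κ ^ 2 ≤ (n : ℝ))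
    (hlam : ∀ z : Fin n → ℤ, z ≠ 0 → (1/2 + κ) * n ≤ τ * ‖D d z‖ ^ 2) :
    gf d τ 0 ≤ 3/2 := by
  classical
  have h1κ : (0:ℝ) < 1 + κ := by linarith
  set t : ℝ := 1 / (1 + κ) with htdef
  have ht0 : 0 < t := by positivity
  have ht1 : t < 1 := by
    rw [htdef, div_lt_one h1κ]; linarith
  set γ : ℝ := κ ^ 2 / (2 * (1 + κ)) with hγdef
  have hγ : 0 < γ := by positivity
  set ρ : ℝ := gf d τ 0 with hρdef
  have hρ0 : 0 ≤ ρ := gf_nonneg d τ 0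
  have hsum : Summable (fun z : Fin n → ℤ => rexp (-(τ * ‖D d z‖ ^ 2))) := by
    have := summable_gauss d hτ (0 : Euc n)
    refine this.congr fun z => ?_
    rw [add_zero]
  -- split off the zero term
  have hsplit : ρ = 1 + ∑' z : Fin n → ℤ, ite (z = 0) 0 (rexp (-(τ * ‖D d z‖ ^ 2))) := by
    rw [hρdef, gf_zero_eq, Summable.tsum_eq_add_tsum_ite hsum 0]
    congr 1
    have : D d 0 = 0 := by simp [D]
    rw [this]
    simp
  -- bound the nonzero terms
  have hE : ∀ z : Fin n → ℤ, ite (z = 0) 0 (rexp (-(τ * ‖D d z‖ ^ 2)))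
      ≤ rexp (-((1 - t) * ((1/2 + κ) * n))) * rexp (-(t * τ * ‖D d z‖ ^ 2)) := by
    intro z
    by_cases h : z = 0
    · rw [if_pos h]; positivity
    · rw [if_neg h, ← Real.exp_add]
      apply Real.exp_le_exp.2
      have h1 := hlam z h
      have h2 : (1 - t) * ((1/2 + κ) * n) ≤ (1 - t) * (τ * ‖D d z‖ ^ 2) :=
        mul_le_mul_of_nonneg_left h1 (by linarith)
      nlinarith [h2]
  have hTsum : Summable (fun z : Fin n → ℤ => ite (z = 0) 0 (rexp (-(τ * ‖D d z‖ ^ 2)))) := by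
    apply Summable.of_nonneg_of_le _ _ hsum
    · intro z; split <;> positivity
    · intro z; split
      · positivity
      · exact le_rfl
  set E : ℝ := rexp (-((1 - t) * ((1/2 + κ) * n))) with hEdef
  have hsumt : Summable (fun z : Fin n → ℤ => rexp (-(t * τ * ‖D d z‖ ^ 2))) := by
    have := summable_gauss d (by positivity : 0 < t * τ) (0 : Euc n)
    refine this.congr fun z => ?_
    rw [add_zero]
  have hT : (∑' z : Fin n → ℤ, ite (z = 0) 0 (rexp (-(τ * ‖D d z‖ ^ 2))))
      ≤ E * gf d (t * τ) 0 := by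
    calc (∑' z : Fin n → ℤ, ite (z = 0) 0 (rexp (-(τ * ‖D d z‖ ^ 2))))
        ≤ ∑' z : Fin n → ℤ, E * rexp (-(t * τ * ‖D d z‖ ^ 2)) :=
          Summable.tsum_le_tsum hE hTsum (hsumt.mul_left E)
      _ = E * gf d (t * τ) 0 := by rw [tsum_mul_left, gf_zero_eq]
  have hscale := gf_scale d hτ ht0 ht1
  have htinv : 1 / t = 1 + κ := by rw [htdef]; field_simp
  have h1t : 1 - t = κ / (1 + κ) := by rw [htdef]; field_simp; ring
  have hfactor : E * (1/t) ^ ((n:ℝ)/2) ≤ rexp (-(γ * n)) := by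
    rw [htinv, hEdef, Real.rpow_def_of_pos h1κ, ← Real.exp_add]
    apply Real.exp_le_exp.2
    have hlog : Real.log (1 + κ) ≤ κ := by
      have := Real.log_le_sub_one_of_pos h1κ
      linarith
    have hid : (κ / (1 + κ)) * ((1/2 + κ)) - κ/2 = γ := by
      rw [hγdef]
      field_simp
      ring
    have hn0 : (0:ℝ) ≤ (n:ℝ) := Nat.cast_nonneg n
    calc -((1 - t) * ((1/2 + κ) * n)) + Real.log (1 + κ) * ((n:ℝ)/2)
        ≤ -((1 - t) * ((1/2 + κ) * n)) + (n:ℝ)/2 * κ := by nlinarith [hlog, hn0]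
      _ = -(((κ / (1 + κ)) * (1/2 + κ) - κ/2) * n) := by rw [h1t]; ring
      _ = -(γ * n) := by rw [hid]
  have hexp3 : rexp (-(γ * n)) ≤ 1/3 := by
    have hlog3 : Real.log 3 ≤ γ * n := by
      rw [div_le_iff₀ (by positivity : (0:ℝ) < κ ^ 2)] at hn
      rw [hγdef, div_mul_eq_mul_div, le_div_iff₀ (by positivity : (0:ℝ) < 2 * (1 + κ))]
      nlinarith [hn]
    calc rexp (-(γ * n)) ≤ rexp (-(Real.log 3)) := Real.exp_le_exp.2 (by linarith)
      _ = 1/3 := by rw [Real.exp_neg, Real.exp_log (by norm_num : (0:ℝ) < 3)]; norm_num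
  have hfinal : ρ ≤ 1 + (1/3) * ρ := by
    rw [hsplit]
    have step : (∑' z : Fin n → ℤ, ite (z = 0) 0 (rexp (-(τ * ‖D d z‖ ^ 2))))
        ≤ (1/3) * ρ := by
      calc (∑' z : Fin n → ℤ, ite (z = 0) 0 (rexp (-(τ * ‖D d z‖ ^ 2))))
          ≤ E * gf d (t * τ) 0 := hT
        _ ≤ E * ((1/t) ^ ((n:ℝ)/2) * ρ) := by
            apply mul_le_mul_of_nonneg_left hscale (by positivity)
        _ = (E * (1/t) ^ ((n:ℝ)/2)) * ρ := by ring
        _ ≤ rexp (-(γ * n)) * ρ := mul_le_mul_of_nonneg_right hfactor hρ0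
        _ ≤ (1/3) * ρ := mul_le_mul_of_nonneg_right hexp3 hρ0
    linarith [step]
  linarith [hfinal]

lemma inner_nondeg : LinearMap.BilinForm.Nondegenerate (innerₗ (Euc n)) := by
  constructor
  · intro x hx
    have := hx x
    rw [innerₗ_apply_apply] at this
    exact inner_self_eq_zero.1 this
  · intro x hx
    have := hx x
    rw [innerₗ_apply_apply] at this
    exact inner_self_eq_zero.1 this

end Smooth


open Smooth

set_option maxHeartbeats 1000000 in
theorem smoothing_le_of_lambda1_dual :
    ∀ ε > (0 : ℝ), ∃ N : ℕ, ∀ n ≥ N, ∀ L : Set (Euc n), IsLattice L →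
      ∀ s : ℝ, s ≥ (1 / Real.sqrt (2 * Real.pi) + ε) * Real.sqrt n / lambda1 (dualLattice L) →
        gaussMass (1 / s) (dualLattice L) 0 ≤ 3 / 2 := by
  intro ε hε
  have h2π : (0:ℝ) < 2 * Real.pi := by positivity
  set r : ℝ := Real.sqrt (2 * Real.pi) with hrdef
  have hr : 0 < r := Real.sqrt_pos.2 h2π
  have hr2 : r ^ 2 = 2 * Real.pi := Real.sq_sqrt h2π.le
  set κ : ℝ := ε * r with hκdef
  have hκ : 0 < κ := by positivity
  refine ⟨Nat.ceil (Real.log 3 * (2 * (1 + κ)) / κ ^ 2) + 1, ?_⟩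
  intro n hn L hL s hs
  have hn1 : 1 ≤ n := le_trans (Nat.le_add_left 1 _) hn
  have hnr : Real.log 3 * (2 * (1 + κ)) / κ ^ 2 ≤ (n : ℝ) := by
    calc Real.log 3 * (2 * (1 + κ)) / κ ^ 2
        ≤ (Nat.ceil (Real.log 3 * (2 * (1 + κ)) / κ ^ 2) : ℝ) := Nat.le_ceil _
      _ ≤ (n : ℝ) := by
          have : Nat.ceil (Real.log 3 * (2 * (1 + κ)) / κ ^ 2) ≤ n := by omega
          exact_mod_cast this
  obtain ⟨b, hLb⟩ := hL
  set d : Module.Basis (Fin n) ℝ (Euc n) :=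
    LinearMap.BilinForm.dualBasis (innerₗ (Euc n)) inner_nondeg b with hddef
  have hdb : ∀ i j, ⟪d i, b j⟫ = if j = i then (1:ℝ) else 0 := by
    intro i j
    have := LinearMap.BilinForm.apply_dualBasis_left (B := innerₗ (Euc n)) inner_nondeg b i j
    rwa [innerₗ_apply_apply] at this
  have hrepr : ∀ (x : Euc n) (i : Fin n), d.repr x i = ⟪x, b i⟫ := by
    intro x i
    rw [hddef]
    rw [LinearMap.BilinForm.dualBasis_repr_apply, innerₗ_apply_apply]
  have hbL : ∀ j, b j ∈ L := by
    intro j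
    rw [hLb]
    refine ⟨fun i => if i = j then 1 else 0, ?_⟩
    rw [Finset.sum_eq_single j]
    · simp
    · intro i _ hij; simp [hij]
    · intro h; exact absurd (Finset.mem_univ j) h
  have hdual : dualLattice L = Set.range (D d) := by
    ext w
    constructor
    · intro hw
      choose k hk using fun j => hw (b j) (hbL j)
      refine ⟨k, ?_⟩
      have h1 : d.equivFun w = fun i => (k i : ℝ) := by
        funext i
        rw [Module.Basis.equivFun_apply, hrepr, hk]
      have h2 : w = d.equivFun.symm (fun i => (k i : ℝ)) := by
        rw [← h1, LinearEquiv.symm_apply_apply]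
      rw [h2, ← D_eq]
    · rintro ⟨z, rfl⟩ y hy
      rw [hLb] at hy
      obtain ⟨v, rfl⟩ := hy
      refine ⟨∑ j, z j * v j, ?_⟩
      rw [D, sum_inner]
      push_cast
      apply Finset.sum_congr rfl
      intro i _
      rw [real_inner_smul_left, inner_sum]
      have hterm : ∀ j, ⟪d i, (v j : ℝ) • b j⟫ = (v j : ℝ) * (if j = i then (1:ℝ) else 0) := by
        intro j; rw [real_inner_smul_right, hdb]
      rw [Finset.sum_congr rfl (fun j _ => hterm j)]
      simp [mul_ite]
  -- lambda1 facts
  obtain ⟨C, hC, hcb⟩ := exists_coord_bound d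
  have hDne : ∀ z : Fin n → ℤ, z ≠ 0 → D d z ≠ 0 := by
    intro z hz h0
    have hzz : D d z = D d 0 := by rw [h0]; simp [D]
    exact hz (D_inj d hzz)
  have hlow : ∀ z : Fin n → ℤ, z ≠ 0 → 1/C ≤ ‖D d z‖ := by
    intro z hz
    obtain ⟨i, hi⟩ : ∃ i, z i ≠ 0 := by
      by_contra h; push_neg at h; exact hz (funext h)
    have h1 : (1:ℝ) ≤ |(z i : ℝ)| := by
      rw [← Int.cast_abs]; exact_mod_cast Int.one_le_abs hi
    have h2 := hcb z i
    rw [div_le_iff₀ hC]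
    nlinarith [h1, h2]
  set lam := lambda1 (dualLattice L) with hlamdef
  have hSne : {rr : ℝ | ∃ y ∈ dualLattice L, y ≠ 0 ∧ ‖y‖ = rr}.Nonempty := by
    have hzne : (fun _ : Fin n => (1:ℤ)) ≠ 0 := by
      intro h
      have := congrFun h ⟨0, hn1⟩
      simp at this
    exact ⟨‖D d (fun _ => 1)‖, D d (fun _ => 1),
      by rw [hdual]; exact ⟨_, rfl⟩, hDne _ hzne, rfl⟩
  have hbddS : BddBelow {rr : ℝ | ∃ y ∈ dualLattice L, y ≠ 0 ∧ ‖y‖ = rr} := by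
    refine ⟨0, ?_⟩
    rintro x ⟨y, _, _, hy⟩
    rw [← hy]; exact norm_nonneg y
  have hlampos : 0 < lam := by
    have hle : 1/C ≤ lam := by
      apply le_csInf hSne
      rintro rr ⟨y, hyD, hy0, hyr⟩
      rw [hdual] at hyD
      obtain ⟨z, rfl⟩ := hyD
      have hz : z ≠ 0 := by
        intro h; apply hy0; rw [h]; simp [D]
      rw [← hyr]; exact hlow z hz
    have : (0:ℝ) < 1/C := by positivity
    linarith
  have hlamle : ∀ z : Fin n → ℤ, z ≠ 0 → lam ≤ ‖D d z‖ := by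
    intro z hz
    apply csInf_le hbddS
    exact ⟨D d z, by rw [hdual]; exact ⟨z, rfl⟩, hDne z hz, rfl⟩
  -- positivity of s
  have hceps : (0:ℝ) < 1/r + ε := by positivity
  have hn0R : (0:ℝ) < (n:ℝ) := by exact_mod_cast hn1
  have hsqn : (0:ℝ) < Real.sqrt n := Real.sqrt_pos.2 hn0R
  have hs0 : 0 < s := by
    apply lt_of_lt_of_le _ hs
    positivity
  have hslam : (1/r + ε) * Real.sqrt n ≤ s * lam := by
    rw [ge_iff_le, div_le_iff₀ hlampos] at hs
    linarith
  -- the numeric bound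
  have hcr2 : (1/r + ε) ^ 2 * (2 * Real.pi) = (1 + κ) ^ 2 := by
    have hcr : (1/r + ε) * r = 1 + κ := by
      rw [hκdef]; field_simp
    rw [← hr2, ← mul_pow, hcr]
  have hπc : (1/2 + κ) ≤ Real.pi * (1/r + ε) ^ 2 := by
    nlinarith [hcr2, sq_nonneg κ]
  have hτpos : 0 < Real.pi * s ^ 2 := mul_pos Real.pi_pos (pow_pos hs0 2)
  have hlam2 : ∀ z : Fin n → ℤ, z ≠ 0 → (1/2 + κ) * n ≤ (Real.pi * s ^ 2) * ‖D d z‖ ^ 2 := by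
    intro z hz
    have h1 : (1/r + ε) ^ 2 * n ≤ (s * lam) ^ 2 := by
      have hx : 0 ≤ (1/r + ε) * Real.sqrt n := by positivity
      nlinarith [Real.sq_sqrt hn0R.le, hslam, hx]
    have h2 : (s * lam) ^ 2 ≤ s ^ 2 * ‖D d z‖ ^ 2 := by
      have hll := hlamle z hz
      have hmm : lam * lam ≤ ‖D d z‖ * ‖D d z‖ :=
        mul_le_mul hll hll hlampos.le (norm_nonneg _)
      nlinarith [hmm, sq_nonneg s]
    calc (1/2 + κ) * n ≤ (Real.pi * (1/r + ε) ^ 2) * n :=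
          mul_le_mul_of_nonneg_right hπc hn0R.le
      _ = Real.pi * ((1/r + ε) ^ 2 * n) := by ring
      _ ≤ Real.pi * (s ^ 2 * ‖D d z‖ ^ 2) := by
          have h3 : (1/r + ε) ^ 2 * n ≤ s ^ 2 * ‖D d z‖ ^ 2 := le_trans h1 h2
          exact mul_le_mul_of_nonneg_left h3 Real.pi_pos.le
      _ = (Real.pi * s ^ 2) * ‖D d z‖ ^ 2 := by ring
  -- rewrite gaussMass as gf
  have hgm : gaussMass (1/s) (dualLattice L) 0 = gf d (Real.pi * s ^ 2) 0 := by
    have h1 : gaussMass (1/s) (dualLattice L) 0 = gaussMass (1/s) (Set.range (D d)) 0 := by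
      rw [hdual]
    rw [h1]
    unfold gaussMass gf
    rw [← (Equiv.ofInjective (D d) (D_inj d)).tsum_eq
      (fun y : Set.range (D d) => rexp (-(Real.pi * ‖(y : Euc n) - 0‖ ^ 2 / (1/s) ^ 2)))]
    apply tsum_congr
    intro z
    have hco : ((Equiv.ofInjective (D d) (D_inj d)) z : Euc n) = D d z := rfl
    rw [hco, sub_zero, add_zero]
    congr 1
    have hs' : s ≠ 0 := ne_of_gt hs0
    field_simp
  rw [hgm]
  exact main_bound d hκ hτpos hnr hlam2
end
end

section
/- For every (full-rank) lattice L ⊂ ℝ^n, every t ∈ ℝ^n, and every s > 0, one has ρ_s(L − t) ≤ ρ_s(L). -/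
open scoped BigOperators RealInnerProductSpace

noncomputable section

section Aux
open Real

variable {n : ℕ}


lemma sum1d {γ : ℝ} (hγ : 0 < γ) : Summable (fun k : ℤ => Real.exp (-γ * (k:ℝ)^2)) := by
  have hnat : Summable (fun k : ℕ => Real.exp (-γ * (k:ℝ)^2)) := by
    have hb : Real.exp (-γ) < 1 := Real.exp_lt_one_iff.mpr (by linarith)
    refine Summable.of_nonneg_of_le (fun k => (Real.exp_pos _).le)
      (fun k => ?_) (summable_geometric_of_lt_one (Real.exp_pos _).le hb)
    rw [← Real.exp_nat_mul]
    apply Real.exp_le_exp.mpr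
    have h1 : (k:ℝ) ≤ (k:ℝ)^2 := by
      rcases Nat.eq_zero_or_pos k with h | h
      · simp [h]
      · have : (1:ℝ) ≤ (k:ℝ) := Nat.one_le_cast.mpr h
        nlinarith
    nlinarith
  apply Summable.of_nat_of_neg <;> simpa using hnat

lemma sumNd (m : ℕ) {γ : ℝ} (hγ : 0 < γ) :
    Summable (fun z : Fin m → ℤ => Real.exp (-γ * ∑ i, ((z i : ℝ))^2)) := by
  induction m with
  | zero => exact summable_of_finite_support (Set.toFinite _)
  | succ m ih =>
    rw [← (Fin.consEquiv (fun _ : Fin (m+1) => ℤ)).summable_iff]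
    have : ∀ p : ℤ × (Fin m → ℤ),
        ((fun z : Fin (m+1) → ℤ => Real.exp (-γ * ∑ i, ((z i : ℝ))^2)) ∘
          (Fin.consEquiv (fun _ : Fin (m+1) => ℤ))) p
          = Real.exp (-γ * (p.1:ℝ)^2) * Real.exp (-γ * ∑ i, ((p.2 i : ℝ))^2) := by
      intro p
      simp only [Function.comp_apply, Fin.consEquiv_apply]
      rw [← Real.exp_add, Fin.sum_univ_succ]
      simp [mul_add]
    rw [summable_congr this]
    exact (sum1d hγ).mul_of_nonneg ih (fun _ => (Real.exp_pos _).le) (fun _ => (Real.exp_pos _).le)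

variable {n : ℕ}

def phi (b : Module.Basis (Fin n) ℝ (Euc n)) (z : Fin n → ℤ) : Euc n := ∑ i, (z i : ℝ) • b i

lemma phi_eq (b : Module.Basis (Fin n) ℝ (Euc n)) (z : Fin n → ℤ) :
    phi b z = b.equivFun.symm (fun i => (z i : ℝ)) := by
  rw [Module.Basis.equivFun_symm_apply]; rfl

lemma phi_add (b : Module.Basis (Fin n) ℝ (Euc n)) (z w : Fin n → ℤ) :
    phi b (z + w) = phi b z + phi b w := by
  unfold phi
  rw [← Finset.sum_add_distrib]
  apply Finset.sum_congr rfl; intro i _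
  rw [Pi.add_apply, Int.cast_add, add_smul]

lemma phi_sub (b : Module.Basis (Fin n) ℝ (Euc n)) (z w : Fin n → ℤ) :
    phi b (z - w) = phi b z - phi b w := by
  unfold phi
  rw [← Finset.sum_sub_distrib]
  apply Finset.sum_congr rfl; intro i _
  rw [Pi.sub_apply, Int.cast_sub, sub_smul]

lemma phi_inj (b : Module.Basis (Fin n) ℝ (Euc n)) : Function.Injective (phi b) := by
  intro z w h
  rw [phi_eq, phi_eq] at h
  have h2 := b.equivFun.symm.injective h
  funext i
  have h3 := congrFun h2 i
  exact_mod_cast h3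

private lemma arith_ineq {C M a u S : ℝ} (hC : 0 < C) (hM : 0 < M)
    (hp : 0 < Real.pi) (hS : S ≤ 2*M*a + 2*M*u) :
    -(Real.pi * a / C) ≤ Real.pi * u / C + -(Real.pi / (2*M*C)) * S := by
  have h1 : Real.pi / (2*M*C) * S ≤ Real.pi / (2*M*C) * (2*M*a + 2*M*u) :=
    mul_le_mul_of_nonneg_left hS (by positivity)
  have h2 : Real.pi / (2*M*C) * (2*M*a + 2*M*u) = Real.pi * a / C + Real.pi * u / C := by
    field_simp
  linarith

def gt (b : Module.Basis (Fin n) ℝ (Euc n)) (C : ℝ) (t : Euc n) (z : Fin n → ℤ) : ℝ :=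
  Real.exp (-(Real.pi * ‖phi b z - t‖^2 / C))

lemma gt_pos (b : Module.Basis (Fin n) ℝ (Euc n)) (C : ℝ) (t : Euc n) (z : Fin n → ℤ) :
    0 < gt b C t z := Real.exp_pos _

-- the key summability
lemma summable_gauss (b : Module.Basis (Fin n) ℝ (Euc n)) {C : ℝ} (hC : 0 < C) (t : Euc n) :
    Summable (gt b C t) := by
  unfold gt
  set E := LinearMap.toContinuousLinearMap (b.equivFun : Euc n →ₗ[ℝ] (Fin n → ℝ)) with hE
  set K : ℝ := ‖E‖ + 1 with hKdef
  have hK0 : 0 < K := by positivity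
  have hK : ∀ x : Euc n, ‖(b.equivFun x : Fin n → ℝ)‖ ≤ K * ‖x‖ := by
    intro x
    calc ‖(b.equivFun x : Fin n → ℝ)‖ = ‖E x‖ := rfl
      _ ≤ ‖E‖ * ‖x‖ := E.le_opNorm x
      _ ≤ K * ‖x‖ := mul_le_mul_of_nonneg_right (by simp [hKdef]) (norm_nonneg x)
  set M : ℝ := n * K^2 + 1 with hM
  have hM0 : 0 < M := by positivity
  have key : ∀ z : Fin n → ℤ, (∑ i, ((z i:ℝ))^2) ≤ M * ‖phi b z‖^2 := by
    intro z
    set w : Fin n → ℝ := fun i => (z i : ℝ) with hw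
    have hrepr : b.equivFun (phi b z) = w := by
      rw [phi_eq]; exact b.equivFun.apply_symm_apply w
    have hb : ‖w‖ ≤ K * ‖phi b z‖ := by rw [← hrepr]; exact hK _
    have hterm : ∀ i, (w i)^2 ≤ ‖w‖^2 := by
      intro i
      have h0 : |w i| ≤ ‖w‖ := by
        simpa [Real.norm_eq_abs] using norm_le_pi_norm w i
      calc (w i)^2 = |w i|^2 := (sq_abs _).symm
        _ ≤ ‖w‖^2 := pow_le_pow_left₀ (abs_nonneg _) h0 2
    have hKP : ‖w‖^2 ≤ (K * ‖phi b z‖)^2 :=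
      pow_le_pow_left₀ (norm_nonneg w) hb 2
    calc (∑ i, ((z i:ℝ))^2) ≤ ∑ _i : Fin n, ‖w‖^2 := Finset.sum_le_sum (fun i _ => hterm i)
      _ = n * ‖w‖^2 := by simp [mul_comm]
      _ ≤ n * (K * ‖phi b z‖)^2 := mul_le_mul_of_nonneg_left hKP (Nat.cast_nonneg n)
      _ = (n * K^2) * ‖phi b z‖^2 := by ring
      _ ≤ M * ‖phi b z‖^2 :=
          mul_le_mul_of_nonneg_right (by rw [hM]; linarith) (sq_nonneg _)
  clear hE hKdef hM hK hK0
  clear_value E K M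
  clear E K
  have γpos : 0 < Real.pi / (2 * M * C) := by positivity
  apply Summable.of_nonneg_of_le (fun z => (Real.exp_pos _).le) _
    (((sumNd n γpos).mul_left (Real.exp (Real.pi * ‖t‖^2 / C))))
  intro z
  rw [← Real.exp_add]
  apply Real.exp_le_exp.mpr
  have h1 : ‖phi b z‖^2 ≤ 2*‖phi b z - t‖^2 + 2*‖t‖^2 := by
    have h2 : ‖phi b z‖ ≤ ‖phi b z - t‖ + ‖t‖ := by
      calc ‖phi b z‖ = ‖(phi b z - t) + t‖ := by rw [sub_add_cancel]
        _ ≤ ‖phi b z - t‖ + ‖t‖ := norm_add_le _ _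
    nlinarith [norm_nonneg (phi b z), norm_nonneg (phi b z - t), norm_nonneg t,
      sq_nonneg (‖phi b z - t‖ - ‖t‖), sq_nonneg (‖phi b z - t‖ + ‖t‖ - ‖phi b z‖)]
  have hS : (∑ i, ((z i:ℝ))^2) ≤ 2*M*‖phi b z - t‖^2 + 2*M*‖t‖^2 := by
    have h3 := key z
    nlinarith [hM0, sq_nonneg (‖phi b z‖)]
  exact arith_ineq hC hM0 Real.pi_pos hS

def Fm (b : Module.Basis (Fin n) ℝ (Euc n)) (C : ℝ) (t : Euc n) : ℝ :=
  ∑' z : Fin n → ℤ, gt b C t z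

def liftc (c : Fin n → Fin 2) : Fin n → ℤ := fun i => ((c i : ℕ) : ℤ)

def Am (b : Module.Basis (Fin n) ℝ (Euc n)) (s : ℝ) (c : Fin n → Fin 2) (w : Euc n) : ℝ :=
  ∑' a : Fin n → ℤ, gt b (2 * s^2) w (2 * a + liftc c)

lemma summable_Am (b : Module.Basis (Fin n) ℝ (Euc n)) {s : ℝ} (hs : 0 < s) (c : Fin n → Fin 2)
    (w : Euc n) :
    Summable (fun a : Fin n → ℤ => gt b (2 * s^2) w (2 * a + liftc c)) := by
  have h2s : (0:ℝ) < 2 * s^2 := by positivity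
  have hinj : Function.Injective (fun a : Fin n → ℤ => 2 * a + liftc c) := by
    intro a a' h
    funext i
    have := congrFun h i
    simp only [Pi.add_apply, Pi.mul_apply] at this
    have h2 : (2 : Fin n → ℤ) i = 2 := rfl
    rw [h2] at this
    omega
  exact (summable_gauss b h2s w).comp_injective hinj

-- the reindexing equivalence
def Esplit (n : ℕ) :
    ((Fin n → Fin 2) × ((Fin n → ℤ) × (Fin n → ℤ))) ≃ ((Fin n → ℤ) × (Fin n → ℤ)) where
  toFun q := (q.2.1 + q.2.2 + liftc q.1, q.2.1 - q.2.2)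
  invFun p := (fun i => ⟨((p.1 i + p.2 i) % 2).toNat, by omega⟩,
    (fun i => (p.1 i + p.2 i) / 2, fun i => (p.1 i + p.2 i) / 2 - p.2 i))
  left_inv := by
    rintro ⟨c, a, bb⟩
    have hc : ∀ i, (0:ℤ) ≤ ((c i : ℕ) : ℤ) ∧ ((c i : ℕ) : ℤ) < 2 := by
      intro i
      exact ⟨Int.ofNat_nonneg _, by exact_mod_cast (c i).isLt⟩
    refine Prod.ext ?_ (Prod.ext ?_ ?_) <;> funext i <;>
      simp only [Pi.add_apply, Pi.sub_apply, liftc] <;> obtain ⟨h0, h2⟩ := hc i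
    · apply Fin.ext
      simp only []
      omega
    · omega
    · omega
  right_inv := by
    rintro ⟨x, y⟩
    refine Prod.ext ?_ ?_ <;> funext i <;>
      simp only [Pi.add_apply, Pi.sub_apply, liftc] <;> omega

lemma esplit_sum (n : ℕ) (q : (Fin n → Fin 2) × ((Fin n → ℤ) × (Fin n → ℤ))) :
    ((Esplit n) q).1 + ((Esplit n) q).2 = 2 * q.2.1 + liftc q.1 := by
  show (q.2.1 + q.2.2 + liftc q.1) + (q.2.1 - q.2.2) = _
  ring

lemma esplit_diff (n : ℕ) (q : (Fin n → Fin 2) × ((Fin n → ℤ) × (Fin n → ℤ))) :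
    ((Esplit n) q).1 - ((Esplit n) q).2 = 2 * q.2.2 + liftc q.1 := by
  show (q.2.1 + q.2.2 + liftc q.1) - (q.2.1 - q.2.2) = _
  ring

lemma term_id (b : Module.Basis (Fin n) ℝ (Euc n)) {s : ℝ} (hs : 0 < s) (t t' : Euc n)
    (x y : Fin n → ℤ) :
    gt b (s^2) t x * gt b (s^2) t' y
    = gt b (2 * s^2) (t + t') (x + y) * gt b (2 * s^2) (t - t') (x - y) := by
  unfold gt
  rw [← Real.exp_add, ← Real.exp_add]
  congr 1
  have e1 : phi b (x + y) - (t + t') = (phi b x - t) + (phi b y - t') := by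
    rw [phi_add]; abel
  have e2 : phi b (x - y) - (t - t') = (phi b x - t) - (phi b y - t') := by
    rw [phi_sub]; abel
  rw [e1, e2]
  set u := phi b x - t
  set v := phi b y - t'
  have hpar : ‖u + v‖ * ‖u + v‖ + ‖u - v‖ * ‖u - v‖ = 2 * (‖u‖ * ‖u‖ + ‖v‖ * ‖v‖) := by
    simpa [pow_two] using parallelogram_law_with_norm ℝ u v
  have hs2 : s^2 ≠ 0 := by positivity
  have h2 : ‖u + v‖^2 + ‖u - v‖^2 = 2 * (‖u‖^2 + ‖v‖^2) := by
    simpa [pow_two] using hpar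
  linear_combination (Real.pi / (2 * s^2)) * h2

lemma Fm_eq (b : Module.Basis (Fin n) ℝ (Euc n)) (C : ℝ) (t : Euc n) :
    Fm b C t = ∑' z, gt b C t z := rfl

lemma Am_eq (b : Module.Basis (Fin n) ℝ (Euc n)) (s : ℝ) (c : Fin n → Fin 2) (w : Euc n) :
    Am b s c w = ∑' a, gt b (2 * s^2) w (2 * a + liftc c) := rfl

set_option maxHeartbeats 1000000 in
lemma master (b : Module.Basis (Fin n) ℝ (Euc n)) {s : ℝ} (hs : 0 < s) (t t' : Euc n) :
    Fm b (s^2) t * Fm b (s^2) t'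
      = ∑ c : Fin n → Fin 2, Am b s c (t + t') * Am b s c (t - t') := by
  classical
  have hs2 : (0:ℝ) < s^2 := by positivity
  have hfs : Summable (gt b (s^2) t) := summable_gauss b hs2 t
  have hgs : Summable (gt b (s^2) t') := summable_gauss b hs2 t'
  have hfg : Summable (fun p : (Fin n → ℤ) × (Fin n → ℤ) => gt b (s^2) t p.1 * gt b (s^2) t' p.2) :=
    hfs.mul_of_nonneg hgs (fun _ => (gt_pos b _ _ _).le) (fun _ => (gt_pos b _ _ _).le)
  have step1 : Fm b (s^2) t * Fm b (s^2) t'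
      = ∑' p : (Fin n → ℤ) × (Fin n → ℤ), gt b (s^2) t p.1 * gt b (s^2) t' p.2 := by
    rw [Fm_eq, Fm_eq]
    exact Summable.tsum_mul_tsum hfs hgs hfg
  have hterm : ∀ p : (Fin n → ℤ) × (Fin n → ℤ),
      gt b (s^2) t p.1 * gt b (s^2) t' p.2
        = gt b (2 * s^2) (t + t') (p.1 + p.2) * gt b (2 * s^2) (t - t') (p.1 - p.2) :=
    fun p => term_id b hs t t' p.1 p.2
  have hHsum : Summable (fun p : (Fin n → ℤ) × (Fin n → ℤ) =>
      gt b (2 * s^2) (t + t') (p.1 + p.2) * gt b (2 * s^2) (t - t') (p.1 - p.2)) :=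
    hfg.congr hterm
  have step2 : (∑' p : (Fin n → ℤ) × (Fin n → ℤ), gt b (s^2) t p.1 * gt b (s^2) t' p.2)
      = ∑' p : (Fin n → ℤ) × (Fin n → ℤ),
          gt b (2 * s^2) (t + t') (p.1 + p.2) * gt b (2 * s^2) (t - t') (p.1 - p.2) :=
    tsum_congr hterm
  have hEcong : ∀ q : (Fin n → Fin 2) × ((Fin n → ℤ) × (Fin n → ℤ)),
      ((fun p : (Fin n → ℤ) × (Fin n → ℤ) =>
        gt b (2 * s^2) (t + t') (p.1 + p.2) * gt b (2 * s^2) (t - t') (p.1 - p.2)) ∘ (Esplit n)) q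
      = gt b (2 * s^2) (t + t') (2 * q.2.1 + liftc q.1)
          * gt b (2 * s^2) (t - t') (2 * q.2.2 + liftc q.1) := by
    intro q
    simp only [Function.comp_apply]
    rw [esplit_sum, esplit_diff]
  have hQsum : Summable (fun q : (Fin n → Fin 2) × ((Fin n → ℤ) × (Fin n → ℤ)) =>
      gt b (2 * s^2) (t + t') (2 * q.2.1 + liftc q.1)
        * gt b (2 * s^2) (t - t') (2 * q.2.2 + liftc q.1)) :=
    (((Esplit n).summable_iff).mpr hHsum).congr hEcong
  have step3 : (∑' p : (Fin n → ℤ) × (Fin n → ℤ),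
        gt b (2 * s^2) (t + t') (p.1 + p.2) * gt b (2 * s^2) (t - t') (p.1 - p.2))
      = ∑' q : (Fin n → Fin 2) × ((Fin n → ℤ) × (Fin n → ℤ)),
          gt b (2 * s^2) (t + t') (2 * q.2.1 + liftc q.1)
            * gt b (2 * s^2) (t - t') (2 * q.2.2 + liftc q.1) := by
    rw [← (Esplit n).tsum_eq (fun p : (Fin n → ℤ) × (Fin n → ℤ) =>
      gt b (2 * s^2) (t + t') (p.1 + p.2) * gt b (2 * s^2) (t - t') (p.1 - p.2))]
    exact tsum_congr hEcong
  have step4 : (∑' q : (Fin n → Fin 2) × ((Fin n → ℤ) × (Fin n → ℤ)),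
          gt b (2 * s^2) (t + t') (2 * q.2.1 + liftc q.1)
            * gt b (2 * s^2) (t - t') (2 * q.2.2 + liftc q.1))
      = ∑ c : Fin n → Fin 2, ∑' p : (Fin n → ℤ) × (Fin n → ℤ),
          gt b (2 * s^2) (t + t') (2 * p.1 + liftc c) * gt b (2 * s^2) (t - t') (2 * p.2 + liftc c) := by
    rw [Summable.tsum_prod' hQsum (fun c => hQsum.prod_factor c)]
    exact tsum_fintype _
  have step5 : ∀ c : Fin n → Fin 2,
      (∑' p : (Fin n → ℤ) × (Fin n → ℤ),
          gt b (2 * s^2) (t + t') (2 * p.1 + liftc c) * gt b (2 * s^2) (t - t') (2 * p.2 + liftc c))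
        = Am b s c (t + t') * Am b s c (t - t') := by
    intro c
    have hA1 : Summable (fun a : Fin n → ℤ => gt b (2 * s^2) (t + t') (2 * a + liftc c)) :=
      summable_Am b hs c (t + t')
    have hA2 : Summable (fun a : Fin n → ℤ => gt b (2 * s^2) (t - t') (2 * a + liftc c)) :=
      summable_Am b hs c (t - t')
    have hprod : Summable (fun p : (Fin n → ℤ) × (Fin n → ℤ) =>
        gt b (2 * s^2) (t + t') (2 * p.1 + liftc c) * gt b (2 * s^2) (t - t') (2 * p.2 + liftc c)) :=
      hA1.mul_of_nonneg hA2 (fun _ => (gt_pos b _ _ _).le) (fun _ => (gt_pos b _ _ _).le)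
    rw [Am_eq, Am_eq]
    exact (Summable.tsum_mul_tsum hA1 hA2 hprod).symm
  rw [step1, step2, step3, step4]
  exact Finset.sum_congr rfl (fun c _ => step5 c)

lemma Fm_periodic (b : Module.Basis (Fin n) ℝ (Euc n)) (C : ℝ) (t : Euc n) (z0 : Fin n → ℤ) :
    Fm b C (t - phi b z0) = Fm b C t := by
  unfold Fm
  rw [← (Equiv.addRight z0).tsum_eq (gt b C t)]
  apply tsum_congr
  intro z
  unfold gt
  congr 2
  rw [Equiv.coe_addRight, phi_add]
  abel_nf

lemma Fm_nonneg (b : Module.Basis (Fin n) ℝ (Euc n)) (C : ℝ) (t : Euc n) : 0 ≤ Fm b C t :=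
  tsum_nonneg (fun z => (gt_pos b C t z).le)

lemma Fm_pos (b : Module.Basis (Fin n) ℝ (Euc n)) {C : ℝ} (hC : 0 < C) (t : Euc n) :
    0 < Fm b C t :=
  Summable.tsum_pos (summable_gauss b hC t) (fun z => (gt_pos b C t z).le) 0 (gt_pos b C t 0)

private lemma arith2 {C B A R2 : ℝ} (hC : 0 < C) (h : B ≤ 2*A + 2*R2)
    (hp : 0 < Real.pi) :
    -(Real.pi * A / C) ≤ Real.pi * R2 / C + -(Real.pi * B / (2 * C)) := by
  have h1 : Real.pi/(2*C)*B ≤ Real.pi/(2*C)*(2*A+2*R2) :=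
    mul_le_mul_of_nonneg_left h (by positivity)
  have h2 : Real.pi/(2*C)*(2*A+2*R2) = Real.pi*A/C + Real.pi*R2/C := by
    field_simp
  have h3 : Real.pi*B/(2*C) = Real.pi/(2*C)*B := by ring
  linarith

-- bound for reduced shifts
lemma Fm_le_of_small (b : Module.Basis (Fin n) ℝ (Euc n)) {s : ℝ} (hs : 0 < s) {t : Euc n} {R : ℝ}
    (hR : ‖t‖ ≤ R) :
    Fm b (s^2) t ≤ Real.exp (Real.pi * R^2 / s^2) * Fm b (2 * s^2) 0 := by
  have hs2 : (0:ℝ) < s^2 := by positivity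
  have h2s : (0:ℝ) < 2 * s^2 := by positivity
  have hR0 : 0 ≤ R := le_trans (norm_nonneg t) hR
  unfold Fm
  rw [← tsum_mul_left]
  apply Summable.tsum_le_tsum _ (summable_gauss b hs2 t)
    ((summable_gauss b h2s 0).mul_left _)
  intro z
  unfold gt
  rw [← Real.exp_add]
  apply Real.exp_le_exp.mpr
  have h1 : ‖phi b z‖^2 ≤ 2*‖phi b z - t‖^2 + 2*‖t‖^2 := by
    have h2 : ‖phi b z‖ ≤ ‖phi b z - t‖ + ‖t‖ := by
      calc ‖phi b z‖ = ‖(phi b z - t) + t‖ := by rw [sub_add_cancel]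
        _ ≤ ‖phi b z - t‖ + ‖t‖ := norm_add_le _ _
    nlinarith [norm_nonneg (phi b z), norm_nonneg (phi b z - t), norm_nonneg t,
      sq_nonneg (‖phi b z - t‖ - ‖t‖), sq_nonneg (‖phi b z - t‖ + ‖t‖ - ‖phi b z‖)]
  have ht2 : ‖t‖^2 ≤ R^2 := pow_le_pow_left₀ (norm_nonneg t) hR 2
  rw [sub_zero]
  exact arith2 hs2 (by linarith) Real.pi_pos

lemma Fm_bounded (b : Module.Basis (Fin n) ℝ (Euc n)) {s : ℝ} (hs : 0 < s) :
    ∀ t : Euc n, Fm b (s^2) t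
      ≤ Real.exp (Real.pi * (∑ i, ‖b i‖)^2 / s^2) * Fm b (2 * s^2) 0 := by
  intro t
  set R : ℝ := ∑ i, ‖b i‖ with hRdef
  set z0 : Fin n → ℤ := fun i => ⌊b.equivFun t i⌋ with hz0
  have hper : Fm b (s^2) (t - phi b z0) = Fm b (s^2) t := Fm_periodic b (s^2) t z0
  rw [← hper]
  set t' : Euc n := t - phi b z0 with ht'
  have hcoord : ∀ i, b.equivFun t' i = b.equivFun t i - (z0 i : ℝ) := by
    intro i
    rw [ht', map_sub]
    have : b.equivFun (phi b z0) = fun i => ((z0 i : ℝ)) := by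
      rw [phi_eq]; exact b.equivFun.apply_symm_apply _
    rw [Pi.sub_apply, this]
  have hnorm : ‖t'‖ ≤ R := by
    have hexp : t' = ∑ i, b.equivFun t' i • b i := (b.sum_equivFun t').symm
    rw [hexp]
    calc ‖∑ i, b.equivFun t' i • b i‖ ≤ ∑ i, ‖b.equivFun t' i • b i‖ :=
          norm_sum_le _ _
      _ ≤ ∑ i, ‖b i‖ := by
          apply Finset.sum_le_sum
          intro i _
          rw [norm_smul, Real.norm_eq_abs]
          have h1 : |b.equivFun t' i| ≤ 1 := by
            rw [hcoord i, hz0]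
            simp only []
            rw [abs_le]
            constructor
            · have := Int.floor_le (b.equivFun t i); linarith
            · have := Int.lt_floor_add_one (b.equivFun t i); linarith
          nlinarith [norm_nonneg (b i), abs_nonneg (b.equivFun t' i)]
      _ = R := rfl
  exact Fm_le_of_small b hs hnorm

lemma key4 (b : Module.Basis (Fin n) ℝ (Euc n)) {s : ℝ} (hs : 0 < s) (t : Euc n) :
    (Fm b (s^2) t)^4 ≤ Fm b (s^2) (t + t) * (Fm b (s^2) 0)^3 := by
  classical
  have m1 := master b hs t t
  have m2 := master b hs (t + t) 0
  have m3 := master b hs (0 : Euc n) 0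
  rw [sub_self] at m1
  rw [add_zero, sub_zero] at m2
  rw [add_zero, sub_zero] at m3
  have hcs := Finset.sum_mul_sq_le_sq_mul_sq Finset.univ
    (fun c : Fin n → Fin 2 => Am b s c (t + t)) (fun c : Fin n → Fin 2 => Am b s c 0)
  have e1 : (Fm b (s^2) t)^4 = (Fm b (s^2) t * Fm b (s^2) t)^2 := by ring
  simp only [pow_two] at hcs
  rw [e1, m1, pow_two]
  calc (∑ c : Fin n → Fin 2, Am b s c (t + t) * Am b s c 0) *
        (∑ c : Fin n → Fin 2, Am b s c (t + t) * Am b s c 0)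
      ≤ (∑ c : Fin n → Fin 2, Am b s c (t + t) * Am b s c (t + t)) *
          ∑ c : Fin n → Fin 2, Am b s c 0 * Am b s c 0 := hcs
    _ = (Fm b (s^2) (t + t) * Fm b (s^2) 0) * (Fm b (s^2) 0 * Fm b (s^2) 0) := by
        rw [← m2, ← m3]
    _ = Fm b (s^2) (t + t) * (Fm b (s^2) 0)^3 := by ring

lemma Fm_le_Fm_zero (b : Module.Basis (Fin n) ℝ (Euc n)) {s : ℝ} (hs : 0 < s) (t : Euc n) :
    Fm b (s^2) t ≤ Fm b (s^2) 0 := by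
  have hs2 : (0:ℝ) < s^2 := by positivity
  set F0 : ℝ := Fm b (s^2) 0 with hF0
  have hF0pos : 0 < F0 := Fm_pos b hs2 0
  set Cb : ℝ := Real.exp (Real.pi * (∑ i, ‖b i‖)^2 / s^2) * Fm b (2 * s^2) 0 with hCb
  have hbnd : ∀ u : Euc n, Fm b (s^2) u ≤ Cb := Fm_bounded b hs
  set Q : ℝ := max 1 (Cb / F0) with hQ
  have hQ1 : (1:ℝ) ≤ Q := le_max_left _ _
  have hQ0 : (0:ℝ) < Q := lt_of_lt_of_le one_pos hQ1
  have iter : ∀ k : ℕ, ∀ u : Euc n, Fm b (s^2) u ≤ F0 * Q ^ (((4:ℝ)⁻¹) ^ k) := by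
    intro k
    induction k with
    | zero =>
      intro u
      rw [pow_zero, Real.rpow_one]
      calc Fm b (s^2) u ≤ Cb := hbnd u
        _ = F0 * (Cb / F0) := by field_simp
        _ ≤ F0 * Q := mul_le_mul_of_nonneg_left (le_max_right _ _) hF0pos.le
    | succ k ih =>
      intro u
      have h4 := key4 b hs u
      have h5 : Fm b (s^2) (u + u) ≤ F0 * Q ^ (((4:ℝ)⁻¹) ^ k) := ih (u + u)
      have hpow : (Fm b (s^2) u)^4 ≤ (F0 * Q ^ (((4:ℝ)⁻¹) ^ (k+1)))^4 := by
        have hexp : ((4:ℝ)⁻¹) ^ (k+1) * ((4:ℕ):ℝ) = ((4:ℝ)⁻¹) ^ k := by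
          push_cast
          rw [pow_succ]
          ring
        have hrhs : (F0 * Q ^ (((4:ℝ)⁻¹) ^ (k+1)))^4
            = F0^4 * Q ^ (((4:ℝ)⁻¹) ^ k) := by
          rw [mul_pow, ← Real.rpow_natCast (Q ^ (((4:ℝ)⁻¹) ^ (k+1))) 4,
            ← Real.rpow_mul hQ0.le, hexp]
        rw [hrhs]
        calc (Fm b (s^2) u)^4 ≤ Fm b (s^2) (u + u) * F0^3 := h4
          _ ≤ (F0 * Q ^ (((4:ℝ)⁻¹) ^ k)) * F0^3 :=
            mul_le_mul_of_nonneg_right h5 (by positivity)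
          _ = F0^4 * Q ^ (((4:ℝ)⁻¹) ^ k) := by ring
      have h6 : (0:ℝ) ≤ Fm b (s^2) u := Fm_nonneg b _ u
      have h7 : (0:ℝ) ≤ F0 * Q ^ (((4:ℝ)⁻¹) ^ (k+1)) := by positivity
      exact (pow_le_pow_iff_left₀ h6 h7 (by norm_num)).mp hpow
  -- limit
  have htend : Filter.Tendsto (fun k : ℕ => F0 * Q ^ (((4:ℝ)⁻¹) ^ k))
      Filter.atTop (nhds F0) := by
    have h1 : Filter.Tendsto (fun k : ℕ => ((4:ℝ)⁻¹) ^ k) Filter.atTop (nhds 0) :=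
      tendsto_pow_atTop_nhds_zero_of_lt_one (by norm_num) (by norm_num)
    have h2 : Filter.Tendsto (fun k : ℕ => Q ^ (((4:ℝ)⁻¹) ^ k)) Filter.atTop
        (nhds (Q ^ (0:ℝ))) :=
      ((Real.continuousAt_const_rpow (ne_of_gt hQ0)).tendsto).comp h1
    rw [Real.rpow_zero] at h2
    have := h2.const_mul F0
    simpa using this
  exact ge_of_tendsto htend (Filter.Eventually.of_forall (fun k => iter k t))

end Aux

theorem shifted_gaussMass_le (n : ℕ) (L : Set (Euc n)) (hL : IsLattice L)
    (t : Euc n) (s : ℝ) (hs : 0 < s) :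
    gaussMass s L t ≤ gaussMass s L 0 := by
  obtain ⟨b, hLb⟩ := hL
  have hmem : ∀ z : Fin n → ℤ, phi b z ∈ L := by
    intro z
    rw [hLb]
    exact ⟨z, rfl⟩
  have hbij : Function.Bijective
      (fun z : Fin n → ℤ => (⟨phi b z, hmem z⟩ : L)) := by
    constructor
    · intro z z' h
      exact phi_inj b (congrArg Subtype.val h)
    · rintro ⟨y, hy⟩
      rw [hLb] at hy
      obtain ⟨z, hz⟩ := hy
      exact ⟨z, Subtype.ext hz.symm⟩
  have key : ∀ w : Euc n, gaussMass s L w = Fm b (s^2) w := by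
    intro w
    exact ((Equiv.ofBijective _ hbij).tsum_eq
      (fun y : L => Real.exp (-(Real.pi * ‖(y : Euc n) - w‖ ^ 2 / s ^ 2)))).symm
  rw [key t, key 0]
  exact Fm_le_Fm_zero b hs t
end
end
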